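/- arXiv:2410.03647 — 3 statements merged into one kernel-verified Lean document; each statement's English description precedes it below -/
import Mathlib

section
/- (Simon–Lieb inequality for percolation.) Let d ≥ 2 and β > 0. For every o ∈ S ⊆ Λ ⊆ ℤ^d and every x ∈ Λ: P_β[o ↔_Λ x] ≤ P_β[o ↔_S x] + Σ_{y∈S} Σ_{z∈Λ\S} P_β[o ↔_S y]·p_{yz,β}·P_β[z ↔_Λ x]. -/
open MeasureTheory ENNReal

namespace SpreadOutPerco

/-- Vertices of `ℤ^d`. -/
abbrev V (d : ℕ) := Fin d → ℤ

/-- The sup norm `|x| = max_{1 ≤ j ≤ d} |x_j|`, as a natural number. -/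
def supNorm {d : ℕ} (x : V d) : ℕ := Finset.univ.sup fun i => (x i).natAbs

/-- The box `Λ_n = {x : |x| ≤ n}`. -/
def box (d : ℕ) (n : ℕ) : Set (V d) := {x | supNorm x ≤ n}

/-- The first coordinate `x_1` of a vertex. -/
def x1 {d : ℕ} (x : V d) : ℤ := if h : 0 < d then x ⟨0, h⟩ else 0

/-- The half-space `ℍ_n = -n·e_1 + ℍ = {x : x_1 ≥ -n}`; in particular `hs d 0 = ℍ`. -/
def hs (d : ℕ) (n : ℕ) : Set (V d) := {x | -(n : ℤ) ≤ x1 x}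

/-- The boundary `∂ℍ_n = {x : x_1 = -n}` of the half-space `ℍ_n`. -/
def hsBdry (d : ℕ) (n : ℕ) : Set (V d) := {x | x1 x = -(n : ℤ)}

/-- The normalisation `c_L = |Λ_L \ {0}|⁻¹`. -/
noncomputable def cL (d L : ℕ) : ℝ := ((Nat.card ↥(box d L \ {0})) : ℝ)⁻¹

/-- The coupling constants `J_{uv} = c_L · 1_{1 ≤ |u-v| ≤ L}`. -/
noncomputable def J (d L : ℕ) (u v : V d) : ℝ :=
  if 1 ≤ supNorm (u - v) ∧ supNorm (u - v) ≤ L then cL d L else 0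

/-- The probability `p_{uv,β} = 1 - exp (-β J_{uv})` that the bond `{u,v}` is open. -/
noncomputable def pOpen (d L : ℕ) (β : ℝ) (u v : V d) : ℝ :=
  1 - Real.exp (-β * J d L u v)

/-- The same probability, as an element of `ℝ≥0∞`. -/
noncomputable def pOpenE (d L : ℕ) (β : ℝ) (u v : V d) : ℝ≥0∞ :=
  ENNReal.ofReal (pOpen d L β u v)

lemma supNorm_sub_comm {d : ℕ} (u v : V d) : supNorm (u - v) = supNorm (v - u) := by
  unfold supNorm
  congr 1
  funext i
  have h : (u - v) i = -((v - u) i) := by simp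
  rw [h, Int.natAbs_neg]

lemma J_comm (d L : ℕ) (u v : V d) : J d L u v = J d L v u := by
  unfold J
  rw [supNorm_sub_comm]

/-- The Bernoulli parameter attached to an unordered edge. -/
noncomputable def pEdge (d L : ℕ) (β : ℝ) : Sym2 (V d) → ℝ≥0∞ :=
  Sym2.lift ⟨fun u v => pOpenE d L β u v, by
    intro u v
    show pOpenE d L β u v = pOpenE d L β v u
    unfold pOpenE pOpen
    rw [J_comm]⟩

lemma pEdge_le_one (d L : ℕ) (β : ℝ) (e : Sym2 (V d)) : pEdge d L β e ≤ 1 := by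
  induction e using Sym2.ind with
  | _ u v =>
    have : pEdge d L β s(u, v) = pOpenE d L β u v := Sym2.lift_mk _ u v
    rw [this]
    refine ENNReal.ofReal_le_one.2 ?_
    unfold pOpen
    have := (Real.exp_pos (-β * J d L u v)).le
    linarith

/-- Percolation configurations: each unordered edge is open (`true`) or closed. -/
abbrev Config (d : ℕ) := Sym2 (V d) → Bool

/-- `x` and `y` are connected in `ω` by a path of open edges all of whose vertices lie in
`Λ` (with `x ↔_Λ x` always holding). -/
def ConnIn {d : ℕ} (ω : Config d) (Λ : Set (V d)) (x y : V d) : Prop :=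
  x = y ∨ ∃ (m : ℕ) (f : Fin (m + 1) → V d), f 0 = x ∧ f (Fin.last m) = y ∧
    (∀ i, f i ∈ Λ) ∧ ∀ i : Fin m, ω s(f i.castSucc, f i.succ) = true

/-- The Bernoulli measure of the state of a single edge. -/
noncomputable def edgeMeasure (d L : ℕ) (β : ℝ) (e : Sym2 (V d)) : Measure Bool :=
  (PMF.bernoulli (pEdge d L β e).toNNReal
    (by simpa using ENNReal.toNNReal_mono ENNReal.one_ne_top (pEdge_le_one d L β e))).toMeasure

/-- The finite-volume percolation measure: the product over the finitely many edges in `F`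
of independent Bernoulli measures. -/
noncomputable def finVol (d L : ℕ) (β : ℝ) (F : Finset (Sym2 (V d))) :
    Measure ((e : F) → Bool) :=
  Measure.pi fun e => edgeMeasure d L β (e : Sym2 (V d))

/-- Extend a finite-volume configuration by declaring all other edges closed. -/
def extendConfig {d : ℕ} (F : Finset (Sym2 (V d))) (σ : (e : F) → Bool) : Config d :=
  fun e => if h : e ∈ F then σ ⟨e, h⟩ else false

/-- The probability `P_β[A]` of an (increasing, finitary) event `A`, defined as the
increasing limit over finite edge sets `F` of its finite-volume probabilities.  For every
event which is an increasing union of cylinder events -- such as all the connection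
events used below -- this agrees with the probability of `A` under the infinite product
of the Bernoulli measures `edgeMeasure`. -/
noncomputable def prob (d L : ℕ) (β : ℝ) (A : Set (Config d)) : ℝ≥0∞ :=
  ⨆ F : Finset (Sym2 (V d)), finVol d L β F {σ | extendConfig F σ ∈ A}

/-- The two-point function `P_β[x ↔_Λ y]`. -/
noncomputable def P2 (d L : ℕ) (β : ℝ) (Λ : Set (V d)) (x y : V d) : ℝ≥0∞ :=
  prob d L β {ω | ConnIn ω Λ x y}

/-- The full-space two-point function `P_β[x ↔ y]`. -/
noncomputable def P2full (d L : ℕ) (β : ℝ) (x y : V d) : ℝ≥0∞ :=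
  P2 d L β Set.univ x y

/-- `θ(β)`: the probability that the cluster of the origin is infinite, i.e. the
decreasing limit of the probabilities that `0` is connected to distance `n`. -/
noncomputable def theta (d L : ℕ) (β : ℝ) : ℝ≥0∞ :=
  ⨅ n : ℕ, prob d L β {ω | ∃ y, n ≤ supNorm y ∧ ConnIn ω Set.univ 0 y}

/-- The critical point `β_c = sup {β ≥ 0 : θ(β) = 0}`. -/
noncomputable def betaC (d L : ℕ) : ℝ :=
  sSup {β : ℝ | 0 ≤ β ∧ theta d L β = 0}

/-- `φ_β(S) = Σ_{y ∈ S} Σ_{z ∉ S} P_β[0 ↔_S y] p_{yz,β}`. -/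
noncomputable def phi (d L : ℕ) (β : ℝ) (S : Set (V d)) : ℝ≥0∞ :=
  ∑' y : S, ∑' z : ↥Sᶜ, P2 d L β S 0 y * pOpenE d L β y z

/-- The sharp length `L_β = inf {k ≥ 1 : φ_β(Λ_k) ≤ e⁻²}` (an element of `ℝ≥0∞`,
equal to `∞` if no such `k` exists). -/
noncomputable def sharpLength (d L : ℕ) (β : ℝ) : ℝ≥0∞ :=
  sInf {k : ℝ≥0∞ | ∃ n : ℕ, k = n ∧ 1 ≤ n ∧
    phi d L β (box d n) ≤ ENNReal.ofReal (Real.exp (-2))}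

/-- `exp (-t/ℓ)`, with the convention `exp (-t/∞) = 1`. -/
noncomputable def expDecay (t : ℝ) (ℓ : ℝ≥0∞) : ℝ :=
  if ℓ = ⊤ then 1 else Real.exp (-(t / ℓ.toReal))

/-- `β_0 = inf {β ≥ 0 : φ_β({0}) = 1}`. -/
noncomputable def beta0 (d L : ℕ) : ℝ :=
  sInf {β : ℝ | 0 ≤ β ∧ phi d L β {0} = 1}

/-- `ψ_β(ℍ_n) = Σ_{x ∈ ∂ℍ_n \ {0}} P_β[0 ↔_{ℍ_n} x]`. -/
noncomputable def psi (d L : ℕ) (β : ℝ) (n : ℕ) : ℝ≥0∞ :=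
  ∑' x : ↥(hsBdry d n \ {0}), P2 d L β (hs d n) 0 x

/-- `ψ^{[k]}_β(ℍ_n) = Σ_{x ∈ ∂ℍ_n, |x| ≤ k} P_β[0 ↔_{ℍ_n} x]`. -/
noncomputable def psiK (d L : ℕ) (β : ℝ) (k n : ℕ) : ℝ≥0∞ :=
  ∑' x : ↥{x ∈ hsBdry d n | supNorm x ≤ k}, P2 d L β (hs d n) 0 x

/-- The susceptibility `χ(β) = Σ_x P_β[0 ↔ x]`. -/
noncomputable def chi (d L : ℕ) (β : ℝ) : ℝ≥0∞ :=
  ∑' x : V d, P2full d L β 0 x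

/-- The first coordinate vector `e_1`. -/
def e1 (d : ℕ) : V d := fun i => if (i : ℕ) = 0 then 1 else 0

/-- The correlation length `ξ_β`, defined through
`ξ_β⁻¹ = lim_n -(1/n) log P_β[0 ↔ n e_1]`. -/
noncomputable def xi (d L : ℕ) (β : ℝ) : ℝ :=
  (Filter.limsup
    (fun n : ℕ => -(1 / (n : ℝ)) * Real.log (P2full d L β 0 ((n : ℤ) • e1 d)).toReal)
    Filter.atTop)⁻¹

/-- `β^*(𝐂, L)`: the largest `β ∈ [0, 2 ∧ β_c]` such that for every `0 ≤ β' < β` the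
a priori `ℓ¹` and `ℓ^∞` half-space bounds hold. -/
noncomputable def betaStar (d L : ℕ) (C : ℝ) : ℝ :=
  sSup {β : ℝ | β ∈ Set.Icc 0 (min 2 (betaC d L)) ∧
    ∀ β' : ℝ, 0 ≤ β' → β' < β →
      (∀ n : ℕ, psi d L β' n < ENNReal.ofReal (C / L)) ∧
      (∀ x : V d, x ∈ hs d 0 → x ≠ 0 →
        P2 d L β' (hs d 0) 0 x <
          ENNReal.ofReal (C / (L : ℝ) ^ d *
            ((L : ℝ) / max (L : ℝ) |(x1 x : ℝ)|) ^ (d - 1)))}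

/-- Generalised blocks: sets of the form `(∏_i [a_i, b_i]) ∩ ℤ^d` with
`-∞ ≤ a_i ≤ 0 ≤ b_i ≤ ∞`. -/
def IsBlock {d : ℕ} (B : Set (V d)) : Prop :=
  ∃ a b : Fin d → EReal, (∀ i, a i ≤ 0) ∧ (∀ i, 0 ≤ b i) ∧
    B = {x | ∀ i, a i ≤ ((x i : ℝ) : EReal) ∧ ((x i : ℝ) : EReal) ≤ b i}

/-- The error term `E_β(S, Λ, o, x)` of the reversed Simon--Lieb inequality. -/
noncomputable def Eerr (d L : ℕ) (β : ℝ) (S Λ : Set (V d)) (o x : V d) : ℝ≥0∞ :=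
  (∑' u : S, ∑' v : S, ∑' y : S, ∑' z : ↥(Λ \ S),
      P2 d L β S o u * P2 d L β S u y * pOpenE d L β y z * P2 d L β Λ z v *
        P2 d L β S u v * P2 d L β Λ v x) +
  ∑' u : S, ∑' v : Λ, ∑' y : S, ∑' s : S, ∑' z : ↥(Λ \ S), ∑' t : ↥(Λ \ S),
    if ((y : V d), (z : V d)) ≠ ((s : V d), (t : V d)) then
      P2 d L β S o u * P2 d L β S u y * P2 d L β S u s * pOpenE d L β y z *
        pOpenE d L β s t * P2 d L β Λ z v * P2 d L β Λ t v * P2 d L β Λ v x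
    else 0

/-- The error amplitude `E_β(S)`. -/
noncomputable def EerrAmp (d L : ℕ) (β : ℝ) (S : Set (V d)) : ℝ≥0∞ :=
  (∑' u : S, ∑' v : S, ∑' y : S, ∑' z : ↥Sᶜ,
      P2 d L β S 0 u * P2 d L β S u y * pOpenE d L β y z * P2full d L β z v *
        P2full d L β u v) +
  ∑' u : S, ∑' y : S, ∑' s : S, ∑' v : V d, ∑' z : ↥Sᶜ, ∑' t : ↥Sᶜ,
    if ((y : V d), (z : V d)) ≠ ((s : V d), (t : V d)) then
      P2 d L β S 0 u * P2 d L β S u y * P2 d L β S u s * pOpenE d L β y z *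
        pOpenE d L β s t * P2full d L β z v * P2full d L β t v
    else 0

/-- `x` and `y` are nearest neighbours in `ℤ^d`. -/
def nbr {d : ℕ} (x y : V d) : Prop :=
  ∃ i : Fin d, y = Function.update x i (x i + 1) ∨ y = Function.update x i (x i - 1)

/-- The boundary `∂B` of `B`: vertices of `B` with a nearest neighbour outside `B`. -/
def bdry {d : ℕ} (B : Set (V d)) : Set (V d) := {x | x ∈ B ∧ ∃ y, y ∉ B ∧ nbr x y}

/-- The sup-norm distance from `x` to `∂B`. -/
noncomputable def distBdry {d : ℕ} (x : V d) (B : Set (V d)) : ℕ∞ :=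
  ⨅ b ∈ bdry B, (supNorm (x - b) : ℕ∞)

/-- The `k`-boundary `∂^k B = {x ∈ B : d(x, ∂B) = k}`. -/
def kBdry {d : ℕ} (B : Set (V d)) (k : ℕ) : Set (V d) :=
  {x | x ∈ B ∧ distBdry x B = (k : ℕ∞)}

/-- `Λ_n^+ = {x ∈ Λ_n : x_1 > 0}`. -/
def plusBox (d : ℕ) (n : ℕ) : Set (V d) := {x | supNorm x ≤ n ∧ 0 < x1 x}

/-- The slab `H = H(L) = {x : |x_1| ≤ L}`. -/
def slab (d L : ℕ) : Set (V d) := {x | (x1 x).natAbs ≤ L}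

/-- The exponent `c(d) = |log (1 - 1/(4d²))| / (2 log 2)`. -/
noncomputable def cExp (d : ℕ) : ℝ :=
  |Real.log (1 - 1 / (4 * (d : ℝ) ^ 2))| / (2 * Real.log 2)

/-- One-step transition weights of the spread-out random walk. -/
noncomputable def rwStep (d L : ℕ) (x y : V d) : ℝ≥0∞ := ENNReal.ofReal (J d L x y)

/-- `rwConfined d L S ℓ x y = P^RW_x[X_ℓ = y, X_1, …, X_ℓ ∈ S]`. -/
noncomputable def rwConfined (d L : ℕ) (S : Set (V d)) : ℕ → V d → V d → ℝ≥0∞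
  | 0 => fun x y => if x = y then 1 else 0
  | (n + 1) => fun x y => ∑' z : S, rwStep d L x z * rwConfined d L S n z y

/-- The half-space Green's function
`E^RW_0[Σ_{ℓ < τ} 1_{X_ℓ = x}] = Σ_{ℓ ≥ 0} P^RW_0[X_ℓ = x, τ > ℓ]`,
where `τ = inf {ℓ ≥ 1 : X_ℓ ∉ ℍ}`. -/
noncomputable def rwGreenHalf (d L : ℕ) (x : V d) : ℝ≥0∞ :=
  ∑' ℓ : ℕ, rwConfined d L (hs d 0) ℓ 0 x

/-- For a random walk with step distribution `w` started at `x`,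
`surv w S k x = P[X_0, …, X_k ∈ S]`. -/
noncomputable def surv {d : ℕ} (w : V d → ℝ≥0∞) (S : Set (V d)) : ℕ → V d → ℝ≥0∞
  | 0 => S.indicator 1
  | (k + 1) => S.indicator fun x => ∑' z : V d, w (z - x) * surv w S k z

/-- The expected exit time `E_{μ,u}[τ_n] = Σ_{k ≥ 0} P[τ_n > k]` of the box `Λ_n`,
where `τ_n = inf {k ≥ 0 : X_k ∉ Λ_n}`. -/
noncomputable def exitTimeExp {d : ℕ} (w : V d → ℝ≥0∞) (n : ℕ) (u : V d) : ℝ≥0∞ :=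
  ∑' k : ℕ, surv w (box d n) k u

/-- Membership in the class `𝓟_m`: a probability measure on `ℤ^d`, invariant under
permutations of the coordinates and sign flips of the coordinates, and supported on
`Λ_{2m} \ Λ_{m-1}`. -/
def MemP (d m : ℕ) (w : V d → ℝ≥0∞) : Prop :=
  (∑' x : V d, w x) = 1 ∧
  (∀ σ : Equiv.Perm (Fin d), ∀ x : V d, w (fun i => x (σ i)) = w x) ∧
  (∀ ε : Fin d → Bool, ∀ x : V d, w (fun i => if ε i then -x i else x i) = w x) ∧
  (∀ x : V d, w x ≠ 0 → m ≤ supNorm x ∧ supNorm x ≤ 2 * m)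



/-! ### Auxiliary machinery for the Simon--Lieb inequality -/

section SimonLiebAux

variable {d : ℕ}

/-- An inductive presentation of connectivity, convenient for induction. -/
inductive Conn (ω : Config d) (Λ : Set (V d)) : V d → V d → Prop
  | refl (x : V d) : Conn ω Λ x x
  | cons {x y z : V d} (hx : x ∈ Λ) (hy : y ∈ Λ) (hxy : ω s(x, y) = true)
      (h : Conn ω Λ y z) : Conn ω Λ x z

lemma Conn.mono {ω : Config d} {Λ Λ' : Set (V d)} (hΛ : Λ ⊆ Λ') {u v : V d}
    (h : Conn ω Λ u v) : Conn ω Λ' u v := by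
  induction h with
  | refl x => exact .refl x
  | cons hx hy hxy _ ih => exact .cons (hΛ hx) (hΛ hy) hxy ih

lemma Conn.trans {ω : Config d} {Λ : Set (V d)} {u v w : V d}
    (h : Conn ω Λ u v) (h' : Conn ω Λ v w) : Conn ω Λ u w := by
  induction h with
  | refl x => exact h'
  | cons hx hy hxy _ ih => exact .cons hx hy hxy (ih h')

lemma Conn.mem_right {ω : Config d} {Λ : Set (V d)} {u v : V d}
    (h : Conn ω Λ u v) (hu : u ∈ Λ) : v ∈ Λ := by
  induction h with
  | refl x => exact hu
  | cons hx hy hxy _ ih => exact ih hy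

lemma Conn.mem_left_or_eq {ω : Config d} {Λ : Set (V d)} {u v : V d}
    (h : Conn ω Λ u v) : u ∈ Λ ∨ v = u := by
  cases h with
  | refl => exact Or.inr rfl
  | cons hx hy hxy h => exact Or.inl hx

lemma Conn.transfer {ω ω' : Config d} {T : Set (V d)} {u v : V d}
    (hω : ∀ a b : V d, a ∈ T → b ∈ T → ω s(a, b) = true → ω' s(a, b) = true)
    (h : Conn ω T u v) : Conn ω' T u v := by
  induction h with
  | refl x => exact .refl x
  | cons hx hy hxy _ ih => exact .cons hx hy (hω _ _ hx hy hxy) ih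

lemma conn_of_path {ω : Config d} {Λ : Set (V d)} :
    ∀ (m : ℕ) (f : Fin (m + 1) → V d), (∀ i, f i ∈ Λ) →
      (∀ i : Fin m, ω s(f i.castSucc, f i.succ) = true) →
      Conn ω Λ (f 0) (f (Fin.last m))
  | 0, f, _, _ => by
      have : Fin.last 0 = 0 := rfl
      rw [this]; exact .refl _
  | (m + 1), f, hmem, hedge => by
      have tail := conn_of_path m (f ∘ Fin.succ) (fun i => hmem _)
        (fun i => by
          have := hedge i.succ
          simpa [Function.comp, ← Fin.succ_castSucc] using this)
      have hlast : (f ∘ Fin.succ) (Fin.last m) = f (Fin.last (m + 1)) := by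
        simp [Function.comp, Fin.succ_last]
      have h0 : (f ∘ Fin.succ) 0 = f 1 := by simp [Function.comp]
      rw [hlast, h0] at tail
      have hedge0 : ω s(f 0, f 1) = true := by
        have := hedge 0
        simpa using this
      exact .cons (hmem 0) (hmem 1) hedge0 tail

lemma conn_iff_connIn {ω : Config d} {Λ : Set (V d)} {u v : V d} :
    Conn ω Λ u v ↔ ConnIn ω Λ u v := by
  constructor
  · intro h
    induction h with
    | refl x => exact Or.inl rfl
    | @cons x y z hx hy hxy h ih =>
      right
      rcases ih with rfl | ⟨m, g, hg0, hgl, hgmem, hgedge⟩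
      · refine ⟨1, ![x, y], rfl, rfl, ?_, ?_⟩
        · intro i; fin_cases i <;> simpa
        · intro i; fin_cases i; simpa
      · refine ⟨m + 1, Fin.cons x g, rfl, ?_, ?_, ?_⟩
        · rw [← Fin.succ_last, Fin.cons_succ]; exact hgl
        · intro i
          induction i using Fin.cases with
          | zero => simpa
          | succ j => rw [Fin.cons_succ]; exact hgmem j
        · intro i
          induction i using Fin.cases with
          | zero =>
            simp only [Fin.castSucc_zero, Fin.cons_zero, Fin.cons_succ, hg0]
            exact hxy
          | succ j =>
            have e1 : (Fin.succ j).castSucc = (Fin.castSucc j).succ := (Fin.succ_castSucc j).symm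
            rw [e1, Fin.cons_succ, Fin.cons_succ]
            exact hgedge j
  · rintro (rfl | ⟨m, f, rfl, rfl, hmem, hedge⟩)
    · exact .refl _
    · exact conn_of_path m f hmem hedge

/-- The open cluster of `o` inside `S`. -/
def cluster (ω : Config d) (S : Set (V d)) (o : V d) : Set (V d) := {v | Conn ω S o v}

lemma cluster_subset {ω : Config d} {S : Set (V d)} {o : V d} (ho : o ∈ S) :
    cluster ω S o ⊆ S := fun _ h => Conn.mem_right h ho

lemma cluster_extend {ω : Config d} {S : Set (V d)} {o a b : V d} (ho : o ∈ S)
    (ha : a ∈ cluster ω S o) (hb : b ∈ S) (hab : ω s(a, b) = true) :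
    b ∈ cluster ω S o :=
  Conn.trans ha (.cons (cluster_subset ho ha) hb hab (.refl b))

lemma conn_into_cluster {ω : Config d} {S : Set (V d)} {o : V d} :
    ∀ {a v : V d}, Conn ω S o a → Conn ω S a v →
      Conn ω (S ∩ cluster ω S o) a v := by
  intro a v hoa hav
  induction hav with
  | refl x => exact .refl x
  | @cons x y z hx hy hxy h ih =>
    have hoy : Conn ω S o y := Conn.trans hoa (.cons hx hy hxy (.refl y))
    exact .cons ⟨hx, hoa⟩ ⟨hy, hoy⟩ hxy (ih hoy)

/-- Key decomposition: last exit from the cluster. -/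
lemma key_decomp {ω : Config d} {S Λ : Set (V d)} {o : V d} (ho : o ∈ S)
    {a x : V d} (h : Conn ω Λ a x) :
    Conn ω (Λ \ cluster ω S o) a x ∨ x ∈ cluster ω S o ∨
      ∃ y z : V d, y ∈ cluster ω S o ∧ z ∈ Λ ∧ z ∉ S ∧ ω s(y, z) = true ∧
        Conn ω (Λ \ cluster ω S o) z x := by
  induction h with
  | refl a => exact Or.inl (.refl a)
  | @cons a b x ha hb hab h ih =>
    rcases ih with h1 | h2 | h3
    · by_cases hbC : b ∈ cluster ω S o
      · rcases Conn.mem_left_or_eq h1 with hbin | rfl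
        · exact absurd hbC hbin.2
        · exact Or.inr (Or.inl hbC)
      · by_cases haC : a ∈ cluster ω S o
        · by_cases hbS : b ∈ S
          · exact absurd (cluster_extend ho haC hbS hab) hbC
          · exact Or.inr (Or.inr ⟨a, b, haC, hb, hbS, hab, h1⟩)
        · exact Or.inl (.cons ⟨ha, haC⟩ ⟨hb, hbC⟩ hab h1)
    · exact Or.inr (Or.inl h2)
    · exact Or.inr (Or.inr h3)

lemma main_decomp {ω : Config d} {S Λ : Set (V d)} {o x : V d} (ho : o ∈ S)
    (h : Conn ω Λ o x) :
    Conn ω S o x ∨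
      ∃ y z : V d, y ∈ S ∧ z ∈ Λ ∧ z ∉ S ∧ Conn ω S o y ∧ ω s(y, z) = true ∧
        Conn ω (Λ \ cluster ω S o) z x := by
  rcases key_decomp ho h with h1 | h2 | h3
  · rcases Conn.mem_left_or_eq h1 with hin | hxo
    · exact absurd (Conn.refl o : Conn ω S o o) hin.2
    · subst hxo
      exact Or.inl (.refl x)
  · exact Or.inl h2
  · rcases h3 with ⟨y, z, hy, hz, hzS, hyz, htail⟩
    exact Or.inr ⟨y, z, cluster_subset ho hy, hz, hzS, hy, hyz, htail⟩

lemma conn_endpoint {ω : Config d} {T : Set (V d)} {u v : V d} (h : Conn ω T u v) :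
    v = u ∨ ∃ e : Sym2 (V d), ω e = true ∧ v ∈ e := by
  induction h with
  | refl x => exact Or.inl rfl
  | @cons a b c ha hb hab h ih =>
    rcases ih with h' | he
    · subst h'
      exact Or.inr ⟨s(a, c), hab, Sym2.mem_mk_right a c⟩
    · exact Or.inr he

lemma extendConfig_mem {F : Finset (Sym2 (V d))} {σ : (e : F) → Bool} {e : Sym2 (V d)}
    (h : extendConfig F σ e = true) : e ∈ F := by
  by_contra hm
  rw [extendConfig, dif_neg hm] at h
  cases h

lemma ext_transfer {F : Finset (Sym2 (V d))} {σ τ : (e : F) → Bool}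
    {p : Sym2 (V d) → Prop} (h : ∀ e : F, p e → σ e = τ e) {e : Sym2 (V d)} (hpe : p e)
    (hopen : extendConfig F σ e = true) : extendConfig F τ e = true := by
  have hm : e ∈ F := extendConfig_mem hopen
  rw [extendConfig, dif_pos hm] at hopen ⊢
  rw [← h ⟨e, hm⟩ hpe]
  exact hopen

lemma cluster_finite (F : Finset (Sym2 (V d))) (σ : (e : F) → Bool) (S : Set (V d))
    (o : V d) : (cluster (extendConfig F σ) S o).Finite := by
  have hbig : ({o} ∪ ⋃ e ∈ F, {v : V d | v ∈ e} : Set (V d)).Finite := by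
    refine (Set.finite_singleton o).union (Set.Finite.biUnion F.finite_toSet fun e _ => ?_)
    induction e with
    | _ a b =>
      have : {v : V d | v ∈ s(a, b)} = {a, b} := by
        ext w; simp [Sym2.mem_iff]
      rw [this]
      exact (Set.finite_singleton b).insert a
  refine hbig.subset fun v hv => ?_
  rcases conn_endpoint hv with h' | ⟨e, he, hve⟩
  · exact Or.inl (h' ▸ rfl)
  · exact Or.inr (Set.mem_biUnion (extendConfig_mem he) hve)

/-- Each `edgeMeasure` is a probability measure. -/
instance (d L : ℕ) (β : ℝ) (e : Sym2 (V d)) : IsProbabilityMeasure (edgeMeasure d L β e) := by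
  unfold edgeMeasure; infer_instance

instance (d L : ℕ) (β : ℝ) (F : Finset (Sym2 (V d))) :
    IsProbabilityMeasure (finVol d L β F) := by
  unfold finVol; infer_instance

/-- The independence splitting lemma for the finite-volume measure. -/
lemma finVol_indep (L : ℕ) (β : ℝ) (F : Finset (Sym2 (V d))) (p : Sym2 (V d) → Prop)
    (A B : Set ((e : F) → Bool))
    (hA : ∀ σ τ : (e : F) → Bool, (∀ e : F, p e → σ e = τ e) → σ ∈ A → τ ∈ A)
    (hB : ∀ σ τ : (e : F) → Bool, (∀ e : F, ¬ p e → σ e = τ e) → σ ∈ B → τ ∈ B) :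
    finVol d L β F (A ∩ B) = finVol d L β F A * finVol d L β F B := by
  classical
  set q : F → Prop := fun e => p (e : Sym2 (V d)) with hq
  let φ := MeasurableEquiv.piEquivPiSubtypeProd (fun _ : F => Bool) q
  have hmp := measurePreserving_piEquivPiSubtypeProd
    (fun e : F => edgeMeasure d L β (e : Sym2 (V d))) q
  set μ₁ : Measure ((e : Subtype q) → Bool) :=
    Measure.pi fun e : Subtype q => edgeMeasure d L β ((e : F) : Sym2 (V d)) with hμ₁
  set μ₂ : Measure ((e : {e : F // ¬ q e}) → Bool) :=
    Measure.pi fun e => edgeMeasure d L β ((e : F) : Sym2 (V d)) with hμ₂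
  set s : Set ((e : Subtype q) → Bool) := (fun σ (e : Subtype q) => σ (e : F)) '' A with hs
  set t : Set ((e : {e : F // ¬ q e}) → Bool) := (fun σ e => σ (e : F)) '' B with ht
  have hAeq : A = φ ⁻¹' (s ×ˢ Set.univ) := by
    ext σ
    simp only [Set.mem_preimage, Set.mem_prod, Set.mem_univ, and_true]
    constructor
    · intro h; exact ⟨σ, h, rfl⟩
    · rintro ⟨τ, hτ, hτσ⟩
      refine hA τ σ (fun e he => ?_) hτ
      exact congrFun hτσ ⟨e, he⟩
  have hBeq : B = φ ⁻¹' (Set.univ ×ˢ t) := by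
    ext σ
    simp only [Set.mem_preimage, Set.mem_prod, Set.mem_univ, true_and]
    constructor
    · intro h; exact ⟨σ, h, rfl⟩
    · rintro ⟨τ, hτ, hτσ⟩
      refine hB τ σ (fun e he => ?_) hτ
      exact congrFun hτσ ⟨e, he⟩
  have hABeq : A ∩ B = φ ⁻¹' (s ×ˢ t) := by
    rw [hAeq, hBeq, ← Set.preimage_inter, Set.prod_inter_prod, Set.univ_inter, Set.inter_univ]
  have hmap : ∀ X : Set (((e : Subtype q) → Bool) × ((e : {e : F // ¬ q e}) → Bool)),
      finVol d L β F (φ ⁻¹' X) = (μ₁.prod μ₂) X := by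
    intro X
    rw [← hmp.map_eq, MeasurableEquiv.map_apply]
    rfl
  rw [hABeq, hAeq, hBeq, hmap, hmap, hmap, Measure.prod_prod, Measure.prod_prod,
    Measure.prod_prod, measure_univ, measure_univ, one_mul, mul_one]

/-- The probability that a given edge is open is at most `pOpenE`. -/
lemma finVol_edge_le (L : ℕ) (β : ℝ) (F : Finset (Sym2 (V d))) (y z : V d) :
    finVol d L β F {σ | extendConfig F σ s(y, z) = true} ≤ pOpenE d L β y z := by
  classical
  by_cases he : s(y, z) ∈ F
  · set e₀ : F := ⟨s(y, z), he⟩ with he₀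
    have hset : {σ : (e : F) → Bool | extendConfig F σ s(y, z) = true} =
        Set.pi Set.univ (fun e : F => if e = e₀ then ({true} : Set Bool) else Set.univ) := by
      ext σ
      simp only [Set.mem_setOf_eq, Set.mem_pi, Set.mem_univ, forall_true_left]
      constructor
      · intro h e
        by_cases h' : e = e₀
        · subst h'
          rw [if_pos rfl]
          rw [extendConfig, dif_pos he] at h
          simpa using h
        · rw [if_neg h']; trivial
      · intro h
        have := h e₀
        rw [if_pos rfl] at this
        rw [extendConfig, dif_pos he]
        simpa using this
    rw [hset, finVol, Measure.pi_pi]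
    have hfac : ∀ e : F, edgeMeasure d L β (e : Sym2 (V d))
        (if e = e₀ then ({true} : Set Bool) else Set.univ) =
        if e = e₀ then edgeMeasure d L β s(y, z) {true} else 1 := by
      intro e
      by_cases h' : e = e₀
      · subst h'; simp; rfl
      · rw [if_neg h', if_neg h', measure_univ]
    rw [Finset.prod_congr rfl fun e _ => hfac e, Finset.prod_ite_eq' Finset.univ e₀
      (fun _ => edgeMeasure d L β s(y, z) {true})]
    rw [if_pos (Finset.mem_univ e₀)]
    have hval : edgeMeasure d L β s(y, z) {true} = pEdge d L β s(y, z) := by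
      rw [edgeMeasure, PMF.toMeasure_apply_singleton _ _ (measurableSet_singleton true)]
      show ((pEdge d L β s(y, z)).toNNReal : ℝ≥0∞) = _
      exact ENNReal.coe_toNNReal (ne_top_of_le_ne_top ENNReal.one_ne_top (pEdge_le_one d L β _))
    rw [hval]
    have : pEdge d L β s(y, z) = pOpenE d L β y z := rfl
    rw [this]
  · have hset : {σ : (e : F) → Bool | extendConfig F σ s(y, z) = true} = ∅ := by
      ext σ
      simp only [Set.mem_setOf_eq, Set.mem_empty_iff_false, iff_false]
      intro h
      exact he (extendConfig_mem h)
    rw [hset, measure_empty]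
    exact zero_le

/-- Finite volume connection probabilities are bounded by `P2`. -/
lemma finVol_conn_le (L : ℕ) (β : ℝ) (F : Finset (Sym2 (V d))) (T : Set (V d)) (u v : V d) :
    finVol d L β F {σ | Conn (extendConfig F σ) T u v} ≤ P2 d L β T u v := by
  have hset : {σ : (e : F) → Bool | Conn (extendConfig F σ) T u v} =
      {σ : (e : F) → Bool | extendConfig F σ ∈ {ω | ConnIn ω T u v}} := by
    ext σ
    exact ⟨fun h => conn_iff_connIn.1 h, fun h => conn_iff_connIn.2 h⟩
  rw [hset]
  exact le_iSup (fun F' : Finset (Sym2 (V d)) =>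
    finVol d L β F' {σ | extendConfig F' σ ∈ {ω | ConnIn ω T u v}}) F


lemma cluster_dep {F : Finset (Sym2 (V d))} {S : Set (V d)} {o : V d}
    (ho : o ∈ S) (C : Finset (V d)) (σ τ : (e : F) → Bool)
    (h : ∀ e : F, ((∀ w ∈ (e : Sym2 (V d)), w ∈ S) ∧ ∃ w ∈ (e : Sym2 (V d)), w ∈ C) →
      σ e = τ e)
    (hσ : cluster (extendConfig F σ) S o = ↑C) :
    cluster (extendConfig F τ) S o = ↑C := by
  have hoC : o ∈ (C : Set (V d)) := by rw [← hσ]; exact (Conn.refl o : Conn _ S o o)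
  ext v
  constructor
  · intro hv
    have aux : ∀ {u w : V d}, Conn (extendConfig F τ) S u w →
        u ∈ (C : Set (V d)) → w ∈ (C : Set (V d)) := by
      intro u w hconn
      induction hconn with
      | refl a => exact id
      | @cons a b c ha hb hab _ ih =>
        intro haC
        apply ih
        have hp : (∀ w' ∈ s(a, b), w' ∈ S) ∧ ∃ w' ∈ s(a, b), w' ∈ C := by
          constructor
          · intro w' hw'; rcases Sym2.mem_iff.1 hw' with rfl | rfl
            exacts [ha, hb]
          · exact ⟨a, Sym2.mem_mk_left a b, haC⟩
        have hopenσ : extendConfig F σ s(a, b) = true :=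
          ext_transfer (p := fun e => (∀ w' ∈ e, w' ∈ S) ∧ ∃ w' ∈ e, w' ∈ C)
            (fun e he => (h e he).symm) hp hab
        have hb' : b ∈ cluster (extendConfig F σ) S o :=
          cluster_extend ho (by rw [hσ]; exact haC) hb hopenσ
        rwa [hσ] at hb'
    exact aux hv hoC
  · intro hvC
    have hvσ : v ∈ cluster (extendConfig F σ) S o := by rw [hσ]; exact hvC
    have h1 : Conn (extendConfig F σ) (S ∩ cluster (extendConfig F σ) S o) o v :=
      conn_into_cluster (Conn.refl o) hvσ
    rw [hσ] at h1
    have h2 : Conn (extendConfig F τ) (S ∩ ↑C) o v := by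
      refine Conn.transfer (fun a b ha hb hopen => ?_) h1
      refine ext_transfer (p := fun e => (∀ w' ∈ e, w' ∈ S) ∧ ∃ w' ∈ e, w' ∈ C) h ?_ hopen
      constructor
      · intro w' hw'; rcases Sym2.mem_iff.1 hw' with rfl | rfl
        exacts [ha.1, hb.1]
      · exact ⟨a, Sym2.mem_mk_left a b, ha.2⟩
    exact Conn.mono Set.inter_subset_left h2

lemma conn_dep_out {F : Finset (Sym2 (V d))} (σ τ : (e : F) → Bool) {S Λ : Set (V d)}
    (C : Finset (V d))
    (h : ∀ e : F, ¬((∀ w ∈ (e : Sym2 (V d)), w ∈ S) ∧ ∃ w ∈ (e : Sym2 (V d)), w ∈ C) →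
      σ e = τ e)
    {z x : V d} (hc : Conn (extendConfig F σ) (Λ \ ↑C) z x) :
    Conn (extendConfig F τ) (Λ \ ↑C) z x := by
  refine Conn.transfer (fun a b ha hb hopen => ?_) hc
  refine ext_transfer (p := fun e => ¬((∀ w ∈ e, w ∈ S) ∧ ∃ w ∈ e, w ∈ C)) h ?_ hopen
  rintro ⟨-, w', hw', hw'C⟩
  rcases Sym2.mem_iff.1 hw' with rfl | rfl
  exacts [ha.2 hw'C, hb.2 hw'C]

end SimonLiebAux

/-- Lemma 1.5: the Simon--Lieb inequality for Bernoulli percolation. -/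
theorem simonLieb (d L : ℕ) (hd : 2 ≤ d) (β : ℝ) (hβ : 0 < β)
    (S Λ : Set (V d)) (hSΛ : S ⊆ Λ) (o : V d) (ho : o ∈ S) (x : V d) (hx : x ∈ Λ) :
    P2 d L β Λ o x ≤ P2 d L β S o x +
      ∑' y : S, ∑' z : ↥(Λ \ S),
        P2 d L β S o y * pOpenE d L β y z * P2 d L β Λ z x := by
  classical
  have hP2 : P2 d L β Λ o x = ⨆ F : Finset (Sym2 (V d)),
      finVol d L β F {σ | extendConfig F σ ∈ {ω | ConnIn ω Λ o x}} := rfl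
  rw [hP2]
  refine iSup_le fun F => ?_
  -- Step 1: pathwise decomposition
  have hincl : {σ : (e : F) → Bool | extendConfig F σ ∈ {ω | ConnIn ω Λ o x}} ⊆
      {σ : (e : F) → Bool | Conn (extendConfig F σ) S o x} ∪
      ⋃ (y : S) (z : ↥(Λ \ S)) (C : Finset (V d)),
        (if (y : V d) ∈ C then
          {σ : (e : F) → Bool | cluster (extendConfig F σ) S o = ↑C} ∩
            ({σ : (e : F) → Bool | extendConfig F σ s((y : V d), (z : V d)) = true} ∩
              {σ : (e : F) → Bool | Conn (extendConfig F σ) (Λ \ ↑C) (z : V d) x})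
        else ∅) := by
    intro σ hσ
    have hconn : Conn (extendConfig F σ) Λ o x := conn_iff_connIn.2 hσ
    rcases main_decomp ho hconn with h | ⟨y, z, hyS, hzΛ, hzS, hoy, hyz, htail⟩
    · exact Or.inl h
    · right
      refine Set.mem_iUnion.2 ⟨⟨y, hyS⟩, Set.mem_iUnion.2 ⟨⟨z, Set.mem_diff_of_mem hzΛ hzS⟩, Set.mem_iUnion.2
        ⟨(cluster_finite F σ S o).toFinset, ?_⟩⟩⟩
      rw [if_pos (c := ((⟨y, hyS⟩ : S) : V d) ∈ (cluster_finite F σ S o).toFinset)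
        ((Set.Finite.mem_toFinset _).2 hoy)]
      refine ⟨by simp [Set.Finite.coe_toFinset], hyz, ?_⟩
      show Conn _ (Λ \ _) z x
      rwa [Set.Finite.coe_toFinset]
  -- Step 2: the per-piece bound
  have hG : ∀ (y : S) (z : ↥(Λ \ S)) (C : Finset (V d)),
      finVol d L β F (if (y : V d) ∈ C then
          {σ : (e : F) → Bool | cluster (extendConfig F σ) S o = ↑C} ∩
            ({σ : (e : F) → Bool | extendConfig F σ s((y : V d), (z : V d)) = true} ∩
              {σ : (e : F) → Bool | Conn (extendConfig F σ) (Λ \ ↑C) (z : V d) x})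
        else ∅) ≤
      finVol d L β F (if (y : V d) ∈ C then
          {σ : (e : F) → Bool | cluster (extendConfig F σ) S o = ↑C} else ∅) *
        (pOpenE d L β ↑y ↑z * P2 d L β Λ ↑z x) := by
    rintro ⟨y, hyS⟩ ⟨z, hzΛS⟩ C
    simp only [Subtype.coe_mk]
    by_cases hyC : y ∈ C
    · rw [if_pos hyC, if_pos hyC]
      set EA : Set ((e : F) → Bool) :=
        {σ | cluster (extendConfig F σ) S o = ↑C} with hEA
      set EB : Set ((e : F) → Bool) :=
        {σ | extendConfig F σ s(y, z) = true} with hEB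
      set ED : Set ((e : F) → Bool) :=
        {σ | Conn (extendConfig F σ) (Λ \ ↑C) z x} with hED
      have h1 : finVol d L β F (EA ∩ (EB ∩ ED)) =
          finVol d L β F EA * finVol d L β F (EB ∩ ED) := by
        refine finVol_indep L β F (fun e => (∀ w ∈ e, w ∈ S) ∧ ∃ w ∈ e, w ∈ C) _ _ ?_ ?_
        · intro σ τ hagree hσ
          exact cluster_dep ho C σ τ hagree hσ
        · rintro σ τ hagree ⟨hBm, hDm⟩
          constructor
          · refine ext_transfer (p := fun e => ¬((∀ w ∈ e, w ∈ S) ∧ ∃ w ∈ e, w ∈ C))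
              hagree ?_ hBm
            rintro ⟨hall, -⟩
            exact hzΛS.2 (hall z (Sym2.mem_mk_right y z))
          · exact conn_dep_out σ τ C hagree hDm
      have h2 : finVol d L β F (EB ∩ ED) = finVol d L β F EB * finVol d L β F ED := by
        refine finVol_indep L β F (fun e => e = s(y, z)) _ _ ?_ ?_
        · intro σ τ hagree hBm
          exact ext_transfer (p := fun e => e = s(y, z)) hagree rfl hBm
        · intro σ τ hagree hDm
          refine Conn.transfer (fun a b ha hb hopen => ?_) hDm
          refine ext_transfer (p := fun e => ¬(e = s(y, z))) hagree ?_ hopen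
          intro heq
          have hy' : y ∈ s(a, b) := by rw [heq]; exact Sym2.mem_mk_left y z
          rcases Sym2.mem_iff.1 hy' with h' | h'
          · exact ha.2 (h' ▸ (Finset.mem_coe.2 hyC))
          · exact hb.2 (h' ▸ (Finset.mem_coe.2 hyC))
      calc finVol d L β F (EA ∩ (EB ∩ ED))
          = finVol d L β F EA * (finVol d L β F EB * finVol d L β F ED) := by rw [h1, h2]
        _ ≤ finVol d L β F EA * (pOpenE d L β y z * P2 d L β Λ z x) := by
            refine mul_le_mul_right (mul_le_mul' (finVol_edge_le L β F y z) ?_) _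
            refine le_trans (measure_mono ?_) (finVol_conn_le L β F Λ z x)
            intro σ hσ
            exact Conn.mono Set.diff_subset hσ
    · rw [if_neg hyC, if_neg hyC]
      simp
  -- Step 3: summing the cluster events
  have hsum : ∀ y : S,
      (∑' C : Finset (V d), finVol d L β F (if (y : V d) ∈ C then
        {σ : (e : F) → Bool | cluster (extendConfig F σ) S o = ↑C} else ∅)) ≤
      P2 d L β S o ↑y := by
    intro y
    have hdisj : Pairwise (Function.onFun Disjoint (fun C : Finset (V d) =>
        if (y : V d) ∈ C then
          {σ : (e : F) → Bool | cluster (extendConfig F σ) S o = ↑C} else ∅)) := by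
      intro C C' hne
      rw [Function.onFun]
      by_cases h1 : (y : V d) ∈ C
      · by_cases h2 : (y : V d) ∈ C'
        · rw [if_pos h1, if_pos h2]
          refine Set.disjoint_left.2 fun σ hσ hσ' => ?_
          exact hne (Finset.coe_injective ((hσ.symm.trans hσ')))
        · rw [if_neg h2]
          exact Set.disjoint_empty _
      · rw [if_neg h1]
        exact Set.empty_disjoint _
    rw [← measure_iUnion hdisj (fun C => (Set.toFinite _).measurableSet)]
    refine le_trans (measure_mono ?_) (finVol_conn_le L β F S o ↑y)
    intro σ hσ
    rcases Set.mem_iUnion.1 hσ with ⟨C, hC⟩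
    by_cases h1 : (y : V d) ∈ C
    · rw [if_pos h1] at hC
      show Conn (extendConfig F σ) S o ↑y
      have : (y : V d) ∈ cluster (extendConfig F σ) S o := by
        rw [hC]; exact Finset.mem_coe.2 h1
      exact this
    · rw [if_neg h1] at hC
      cases hC
  -- Step 4: assemble
  refine le_trans (measure_mono hincl) (le_trans (measure_union_le _ _) ?_)
  refine add_le_add (finVol_conn_le L β F S o x) ?_
  refine le_trans (measure_iUnion_le _) (ENNReal.tsum_le_tsum fun y => ?_)
  refine le_trans (measure_iUnion_le _) (ENNReal.tsum_le_tsum fun z => ?_)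
  refine le_trans (measure_iUnion_le _) ?_
  calc (∑' C : Finset (V d), finVol d L β F (if (y : V d) ∈ C then
          {σ : (e : F) → Bool | cluster (extendConfig F σ) S o = ↑C} ∩
            ({σ : (e : F) → Bool | extendConfig F σ s((y : V d), (z : V d)) = true} ∩
              {σ : (e : F) → Bool | Conn (extendConfig F σ) (Λ \ ↑C) (z : V d) x})
        else ∅))
      ≤ ∑' C : Finset (V d), finVol d L β F (if (y : V d) ∈ C then
          {σ : (e : F) → Bool | cluster (extendConfig F σ) S o = ↑C} else ∅) *
        (pOpenE d L β ↑y ↑z * P2 d L β Λ ↑z x) := ENNReal.tsum_le_tsum (hG y z)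
    _ = (∑' C : Finset (V d), finVol d L β F (if (y : V d) ∈ C then
          {σ : (e : F) → Bool | cluster (extendConfig F σ) S o = ↑C} else ∅)) *
        (pOpenE d L β ↑y ↑z * P2 d L β Λ ↑z x) := ENNReal.tsum_mul_right
    _ ≤ P2 d L β S o ↑y * (pOpenE d L β ↑y ↑z * P2 d L β Λ ↑z x) :=
        mul_le_mul_left (hsum y) _
    _ = P2 d L β S o ↑y * pOpenE d L β ↑y ↑z * P2 d L β Λ ↑z x := (mul_assoc _ _ _).symm

end SpreadOutPerco
end

section
/- (Exit time bound for symmetric finite-range random walks.) Let d ≥ 1 and let n, m ≥ 1 be integers with n ≥ m. For every probability measure μ ∈ 𝓟_m and every u ∈ Λ_n, the random walk (X_k) with step distribution μ started at u satisfies E_{μ,u}[τ_n] ≤ 9d·(n/m)², where τ_n = inf{k ≥ 0 : X_k ∉ Λ_n}. -/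
open MeasureTheory ENNReal

namespace SpreadOutPerco

noncomputable def rho {d : ℕ} (x : V d) : ℝ := ∑ i, ((x i : ℝ))^2

lemma rho_nonneg {d : ℕ} (x : V d) : 0 ≤ rho x :=
  Finset.sum_nonneg fun i _ => sq_nonneg _

lemma supNorm_le_iff {d R : ℕ} {x : V d} : supNorm x ≤ R ↔ ∀ i, (x i).natAbs ≤ R := by
  simp [supNorm, Finset.sup_le_iff]

lemma rho_le {d R : ℕ} {x : V d} (h : supNorm x ≤ R) : rho x ≤ d * (R:ℝ)^2 := by
  have h' := supNorm_le_iff.mp h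
  have key : ∀ i : Fin d, ((x i:ℝ))^2 ≤ (R:ℝ)^2 := by
    intro i
    have h1 : |((x i : ℝ))| ≤ (R : ℝ) := by
      rw [← Int.cast_abs, Int.abs_eq_natAbs]
      exact_mod_cast h' i
    calc ((x i:ℝ))^2 = |((x i:ℝ))|^2 := (sq_abs _).symm
      _ ≤ (R:ℝ)^2 := pow_le_pow_left₀ (abs_nonneg _) h1 2
  calc rho x ≤ ∑ _i : Fin d, (R:ℝ)^2 := Finset.sum_le_sum fun i _ => key i
    _ = d * (R:ℝ)^2 := by simp [Finset.sum_const, Finset.card_univ, mul_comm]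

lemma rho_ge {d m : ℕ} {x : V d} (hm : 1 ≤ m) (h : m ≤ supNorm x) : (m:ℝ)^2 ≤ rho x := by
  obtain ⟨i, -, hi⟩ := Finset.le_sup_iff (by omega : (0:ℕ) < m) |>.mp h
  have h1 : (m:ℝ) ≤ |((x i:ℝ))| := by
    rw [← Int.cast_abs, Int.abs_eq_natAbs]
    exact_mod_cast hi
  have h2 : (m:ℝ)^2 ≤ ((x i:ℝ))^2 := by
    rw [← sq_abs ((x i:ℝ))]
    exact pow_le_pow_left₀ (by positivity) h1 2
  calc (m:ℝ)^2 ≤ ((x i:ℝ))^2 := h2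
    _ ≤ rho x := by
      unfold rho
      exact Finset.single_le_sum (f := fun j : Fin d => ((x j:ℝ))^2) (fun j _ => sq_nonneg _) (Finset.mem_univ i)

lemma supNorm_add_le {d : ℕ} (u x : V d) : supNorm (u + x) ≤ supNorm u + supNorm x := by
  rw [supNorm_le_iff]
  intro i
  have hu : (u i).natAbs ≤ supNorm u := Finset.le_sup (f := fun j => (u j).natAbs) (Finset.mem_univ i)
  have hx : (x i).natAbs ≤ supNorm x := Finset.le_sup (f := fun j => (x j).natAbs) (Finset.mem_univ i)
  calc ((u + x) i).natAbs = (u i + x i).natAbs := rfl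
    _ ≤ (u i).natAbs + (x i).natAbs := Int.natAbs_add_le _ _
    _ ≤ _ := by omega

lemma rho_add {d : ℕ} (u x : V d) :
    rho (u + x) = rho u + 2 * (∑ i, (u i : ℝ) * (x i : ℝ)) + rho x := by
  unfold rho
  rw [Finset.mul_sum, ← Finset.sum_add_distrib, ← Finset.sum_add_distrib]
  refine Finset.sum_congr rfl fun i _ => ?_
  have : ((u + x) i : ℝ) = (u i : ℝ) + (x i : ℝ) := by push_cast [Pi.add_apply]; ring
  rw [this]; ring


/-- Proposition A.4: exit time bound for symmetric finite-range random walks. -/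
theorem exitTimeBound (d : ℕ) (hd : 1 ≤ d) (n m : ℕ) (hm : 1 ≤ m) (hmn : m ≤ n)
    (w : V d → ℝ≥0∞) (hw : MemP d m w) (u : V d) (hu : u ∈ box d n) :
    exitTimeExp w n u ≤ ENNReal.ofReal (9 * d * ((n : ℝ) / (m : ℝ)) ^ 2) := by
  classical
  obtain ⟨hsum, hperm, hflip, hsupp⟩ := hw
  -- finite support
  set F : Finset (V d) := Fintype.piFinset (fun _ : Fin d => Finset.Icc (-(2*m:ℤ)) (2*m)) with hF
  have hwF : ∀ x : V d, x ∉ F → w x = 0 := by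
    intro x hx
    by_contra h
    apply hx
    have h3 := supNorm_le_iff.mp (hsupp x h).2
    rw [hF, Fintype.mem_piFinset]
    intro i
    have := h3 i
    simp only [Finset.mem_Icc]
    omega
  have hwtop : ∀ x : V d, w x ≠ ⊤ := by
    intro x
    have h1 : w x ≤ ∑' y, w y := ENNReal.le_tsum x
    rw [hsum] at h1
    exact ne_top_of_le_ne_top one_ne_top h1
  set p : V d → ℝ := fun x => (w x).toReal with hp
  have hp0 : ∀ x, 0 ≤ p x := fun _ => ENNReal.toReal_nonneg
  have hwp : ∀ x, w x = ENNReal.ofReal (p x) := fun x => (ENNReal.ofReal_toReal (hwtop x)).symm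
  have hFsum : ∑ x ∈ F, w x = 1 := by rw [← tsum_eq_sum (L := SummationFilter.unconditional _) (fun x hx => hwF x hx), hsum]
  have hpsum : ∑ x ∈ F, p x = 1 := by
    have h := ENNReal.toReal_sum (s := F) (f := w) (fun x _ => hwtop x)
    rw [hFsum] at h
    simpa using h.symm
  -- symmetry: mean zero
  have hflip' : ∀ i : Fin d, ∀ x : V d, w (fun j => if j = i then -x j else x j) = w x := by
    intro i x
    have h := hflip (fun j => decide (j = i)) x
    simpa only [decide_eq_true_eq] using h
  have hmean : ∀ i : Fin d, ∑ x ∈ F, p x * ((x i : ℤ) : ℝ) = 0 := by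
    intro i
    set e : V d ≃ V d :=
      { toFun := fun x j => if j = i then -x j else x j
        invFun := fun x j => if j = i then -x j else x j
        left_inv := fun x => by funext j; by_cases h : j = i <;> simp [h]
        right_inv := fun x => by funext j; by_cases h : j = i <;> simp [h] } with he
    have hmemF : ∀ x : V d, x ∈ F ↔ e x ∈ F := by
      intro x
      rw [hF, Fintype.mem_piFinset, Fintype.mem_piFinset]
      constructor <;> intro h j <;> have hj' := h j <;> by_cases hj : j = i <;>
        simp only [he, Equiv.coe_fn_mk, hj, if_true, if_false, Finset.mem_Icc] at hj' ⊢ <;>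
        omega
    have key : ∑ x ∈ F, p x * ((x i : ℤ) : ℝ) = ∑ x ∈ F, -(p x * ((x i : ℤ) : ℝ)) := by
      refine Finset.sum_equiv e (fun x => hmemF x) ?_
      intro x _
      have hpe : p (e x) = p x := by
        exact congrArg ENNReal.toReal (hflip' i x)
      have hxe : ((e x) i : ℤ) = -(x i) := by simp [he]
      rw [hpe, hxe]
      push_cast
      ring
    have h2 : ∑ x ∈ F, -(p x * ((x i : ℤ) : ℝ)) = -∑ x ∈ F, p x * ((x i : ℤ) : ℝ) :=
      Finset.sum_neg_distrib _
    linarith [key.trans h2]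
  -- variance lower bound
  set sig : ℝ := ∑ x ∈ F, p x * rho x with hsig
  have hvar : (m:ℝ)^2 ≤ sig := by
    have hterm : ∀ x ∈ F, p x * (m:ℝ)^2 ≤ p x * rho x := by
      intro x _
      rcases eq_or_ne (w x) 0 with h | h
      · simp [hp, h]
      · exact mul_le_mul_of_nonneg_left (rho_ge hm (hsupp x h).1) (hp0 x)
    calc (m:ℝ)^2 = ∑ x ∈ F, p x * (m:ℝ)^2 := by rw [← Finset.sum_mul, hpsum, one_mul]
      _ ≤ sig := Finset.sum_le_sum hterm
  -- real-valued casts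
  have hmR : (0:ℝ) < m := by exact_mod_cast hm
  have hm2 : (0:ℝ) < (m:ℝ)^2 := by positivity
  have hdR : (1:ℝ) ≤ d := by exact_mod_cast hd
  have hnR : (m:ℝ) ≤ n := by exact_mod_cast hmn
  -- the supersolution
  set C : ℝ := d * ((n:ℝ) + 2*m)^2 with hC
  set g : V d → ℝ := fun v => (C - rho v) / (m:ℝ)^2 with hgdef0
  have hgdef : ∀ v : V d, g v = (C - rho v) / (m:ℝ)^2 := fun v => rfl
  have hg_box : ∀ v : V d, v ∈ box d n → 1 ≤ g v := by
    intro v hv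
    rw [hgdef, le_div_iff₀ hm2]
    have h1 : rho v ≤ d * (n:ℝ)^2 := rho_le hv
    nlinarith [h1, mul_le_mul_of_nonneg_right hdR
        (by nlinarith : (0:ℝ) ≤ 4*(n:ℝ)*m + 4*(m:ℝ)^2),
      mul_le_mul_of_nonneg_right hnR hmR.le]
  have hg_reach : ∀ v : V d, supNorm v ≤ n + 2*m → 0 ≤ g v := by
    intro v hv
    have h2 := rho_le hv
    have h1 : rho v ≤ C := by
      rw [hC]
      push_cast at h2 ⊢
      linarith
    rw [hgdef]
    exact div_nonneg (by linarith) hm2.le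
  -- main induction
  have main : ∀ k : ℕ, ∀ v : V d,
      (∑ j ∈ Finset.range (k+1), surv w (box d n) j v) ≤ ENNReal.ofReal (g v) := by
    intro k
    induction k with
    | zero =>
      intro v
      rw [Finset.sum_range_one]
      by_cases hv : v ∈ box d n
      · have h0 : surv w (box d n) 0 v = 1 := by
          show (box d n).indicator 1 v = 1
          rw [Set.indicator_of_mem hv]; rfl
        rw [h0, ← ENNReal.ofReal_one]
        exact ENNReal.ofReal_le_ofReal (hg_box v hv)
      · have h0 : surv w (box d n) 0 v = 0 := by
          show (box d n).indicator 1 v = 0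
          rw [Set.indicator_of_notMem hv]
        simp [h0]
    | succ k ih =>
      intro v
      by_cases hv : v ∈ box d n
      swap
      · have h0 : ∀ j, surv w (box d n) j v = 0 := by
          intro j
          cases j with
          | zero =>
            show (box d n).indicator 1 v = 0
            rw [Set.indicator_of_notMem hv]
          | succ j =>
            show (box d n).indicator _ v = 0
            rw [Set.indicator_of_notMem hv]
        simp [h0]
      have hgr : ∀ x : V d, w x ≠ 0 → 0 ≤ g (v + x) := by
        intro x h
        apply hg_reach
        have h1 : supNorm x ≤ 2*m := (hsupp x h).2
        have h2 : supNorm v ≤ n := hv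
        calc supNorm (v+x) ≤ supNorm v + supNorm x := supNorm_add_le v x
          _ ≤ n + 2*m := by omega
      have hnn : ∀ x ∈ F, 0 ≤ p x * g (v + x) := by
        intro x _
        rcases eq_or_ne (w x) 0 with h | h
        · simp [hp, h]
        · exact mul_nonneg (hp0 x) (hgr x h)
      have hstep : ∀ j, surv w (box d n) (j+1) v
          = ∑' z : V d, w (z - v) * surv w (box d n) j z := by
        intro j
        show (box d n).indicator _ v = _
        rw [Set.indicator_of_mem hv]
      have h00 : surv w (box d n) 0 v = 1 := by
        show (box d n).indicator 1 v = 1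
        rw [Set.indicator_of_mem hv]; rfl
      rw [Finset.sum_range_succ', h00]
      calc (∑ j ∈ Finset.range (k+1), surv w (box d n) (j+1) v) + 1
          = (∑ j ∈ Finset.range (k+1), ∑' z : V d, w (z - v) * surv w (box d n) j z) + 1 := by
            rw [Finset.sum_congr rfl (fun j _ => hstep j)]
        _ = (∑' z : V d, ∑ j ∈ Finset.range (k+1), w (z - v) * surv w (box d n) j z) + 1 := by
            rw [Summable.tsum_finsetSum (fun _ _ => ENNReal.summable)]
        _ = (∑' z : V d, w (z - v) * ∑ j ∈ Finset.range (k+1), surv w (box d n) j z) + 1 := by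
            congr 1
            exact tsum_congr fun z => (Finset.mul_sum _ _ _).symm
        _ = (∑' x : V d, w x * ∑ j ∈ Finset.range (k+1), surv w (box d n) j (v + x)) + 1 := by
            congr 1
            rw [← (Equiv.addLeft v).tsum_eq
              (fun z => w (z - v) * ∑ j ∈ Finset.range (k+1), surv w (box d n) j z)]
            exact tsum_congr fun x => by simp [add_sub_cancel_left]
        _ = (∑ x ∈ F, w x * ∑ j ∈ Finset.range (k+1), surv w (box d n) j (v + x)) + 1 := by
            congr 1
            exact tsum_eq_sum fun x hx => by rw [hwF x hx, zero_mul]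
        _ ≤ (∑ x ∈ F, w x * ENNReal.ofReal (g (v + x))) + 1 := by
            gcongr with x hx
            exact ih (v + x)
        _ = (∑ x ∈ F, ENNReal.ofReal (p x * g (v + x))) + 1 := by
            congr 1
            refine Finset.sum_congr rfl fun x _ => ?_
            rcases eq_or_ne (w x) 0 with h | h
            · have hpx : p x = 0 := by simp [hp, h]
              rw [h, zero_mul, hpx, zero_mul, ENNReal.ofReal_zero]
            · rw [hwp x, ← ENNReal.ofReal_mul (hp0 x)]
        _ = ENNReal.ofReal (∑ x ∈ F, p x * g (v + x)) + 1 := by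
            rw [ENNReal.ofReal_sum_of_nonneg hnn]
        _ = ENNReal.ofReal ((∑ x ∈ F, p x * g (v + x)) + 1) := by
            rw [ENNReal.ofReal_add (Finset.sum_nonneg hnn) zero_le_one, ENNReal.ofReal_one]
        _ ≤ ENNReal.ofReal (g v) := by
            apply ENNReal.ofReal_le_ofReal
            -- the real computation
            have hip : ∑ x ∈ F, p x * (∑ i, ((v i : ℤ):ℝ) * ((x i : ℤ):ℝ)) = 0 := by
              calc ∑ x ∈ F, p x * (∑ i, ((v i : ℤ):ℝ) * ((x i : ℤ):ℝ))
                  = ∑ x ∈ F, ∑ i, ((v i : ℤ):ℝ) * (p x * ((x i : ℤ):ℝ)) := by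
                    refine Finset.sum_congr rfl fun x _ => ?_
                    rw [Finset.mul_sum]
                    exact Finset.sum_congr rfl fun i _ => by ring
                _ = ∑ i, ∑ x ∈ F, ((v i : ℤ):ℝ) * (p x * ((x i : ℤ):ℝ)) := Finset.sum_comm
                _ = ∑ i, ((v i : ℤ):ℝ) * ∑ x ∈ F, p x * ((x i : ℤ):ℝ) := by
                    exact Finset.sum_congr rfl fun i _ => (Finset.mul_sum _ _ _).symm
                _ = 0 := by simp [hmean]
            have hS : ∑ x ∈ F, p x * rho (v + x) = rho v + sig := by
              calc ∑ x ∈ F, p x * rho (v + x)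
                  = ∑ x ∈ F, (p x * rho v
                      + 2 * (p x * ∑ i, ((v i : ℤ):ℝ) * ((x i : ℤ):ℝ)) + p x * rho x) := by
                    refine Finset.sum_congr rfl fun x _ => ?_
                    rw [rho_add]; ring
                _ = (∑ x ∈ F, p x) * rho v
                      + 2 * (∑ x ∈ F, p x * ∑ i, ((v i : ℤ):ℝ) * ((x i : ℤ):ℝ))
                      + ∑ x ∈ F, p x * rho x := by
                    rw [Finset.sum_add_distrib, Finset.sum_add_distrib, Finset.sum_mul,
                      ← Finset.mul_sum]
                _ = rho v + sig := by rw [hpsum, hip, ← hsig]; ring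
            have hsum_g : ∑ x ∈ F, p x * g (v + x) = (C - rho v - sig)/(m:ℝ)^2 := by
              calc ∑ x ∈ F, p x * g (v + x)
                  = ∑ x ∈ F, (p x * C - p x * rho (v+x))/(m:ℝ)^2 := by
                    refine Finset.sum_congr rfl fun x _ => ?_
                    rw [hgdef]; ring
                _ = ((∑ x ∈ F, p x * C) - ∑ x ∈ F, p x * rho (v+x))/(m:ℝ)^2 := by
                    rw [← Finset.sum_div, Finset.sum_sub_distrib]
                _ = (C - rho v - sig)/(m:ℝ)^2 := by
                    rw [hS, ← Finset.sum_mul, hpsum]; ring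
            have h1 : 1 ≤ sig/(m:ℝ)^2 := (one_le_div hm2).2 hvar
            rw [hsum_g, hgdef]
            have h2 : (C - rho v)/(m:ℝ)^2 = (C - rho v - sig)/(m:ℝ)^2 + sig/(m:ℝ)^2 := by
              ring
            linarith
  -- conclusion
  have hb : ENNReal.ofReal (g u) ≤ ENNReal.ofReal (9 * d * ((n : ℝ) / (m : ℝ)) ^ 2) := by
    apply ENNReal.ofReal_le_ofReal
    rw [hgdef, div_pow, ← mul_div_assoc, div_le_div_iff₀ hm2 hm2]
    have h1 : 0 ≤ rho u := rho_nonneg u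
    rw [hC]
    nlinarith [mul_nonneg (by linarith : (0:ℝ) ≤ (d:ℝ))
      (mul_nonneg (by linarith : (0:ℝ) ≤ 2*(n:ℝ) - 2*m) (by linarith : (0:ℝ) ≤ 4*(n:ℝ) + 2*m))]
  refine le_trans ?_ hb
  unfold exitTimeExp
  refine Summable.tsum_le_of_sum_le ENNReal.summable ?_
  intro s
  have hsub : s ⊆ Finset.range (s.sup id + 1) := by
    intro k hk
    rw [Finset.mem_range]
    have : k ≤ s.sup id := Finset.le_sup (f := id) hk
    omega
  calc ∑ k ∈ s, surv w (box d n) k u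
      ≤ ∑ k ∈ Finset.range (s.sup id + 1), surv w (box d n) k u :=
        Finset.sum_le_sum_of_subset hsub
    _ ≤ ENNReal.ofReal (g u) := main (s.sup id) u

end SpreadOutPerco
end

section
/- (Convolution estimate.) Let d > 4 and 𝐂 > 0. There exists A = A(𝐂,d) > 0, independent of L, such that for every integer L ≥ 1 and every function f : ℤ^d → [0,∞) satisfying f(x) ≤ 1{x=0} + (𝐂/L^d)·(L/max(L,|x|))^{d−2} for all x ∈ ℤ^d, the convolution (f*f)(x) = Σ_{y∈ℤ^d} f(y)·f(x−y) satisfies (f*f)(0) ≤ A and (f*f)(x) ≤ A·(1/L^4)·(1/max(L,|x|))^{d−4} for every x ∈ ℤ^d \ {0}. -/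
open MeasureTheory ENNReal

namespace SpreadOutPerco

/-- The box as a Finset. -/
noncomputable def boxF (d n : ℕ) : Finset (V d) := Finset.Icc (fun _ => -(n : ℤ)) (fun _ => (n : ℤ))

lemma mem_boxF {d n : ℕ} {x : V d} : x ∈ boxF d n ↔ supNorm x ≤ n := by
  simp only [boxF, Finset.mem_Icc, Pi.le_def, supNorm, Finset.sup_le_iff, Finset.mem_univ,
    true_implies]
  constructor
  · rintro ⟨h1, h2⟩ i; have := h1 i; have := h2 i; omega
  · intro h
    exact ⟨fun i => by have := h i; omega, fun i => by have := h i; omega⟩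

lemma boxF_mono {d : ℕ} {m n : ℕ} (h : m ≤ n) : boxF d m ⊆ boxF d n := by
  intro x hx; rw [mem_boxF] at *; omega

lemma card_boxF (d n : ℕ) : (boxF d n).card = (2 * n + 1) ^ d := by
  rw [boxF, Pi.card_Icc]
  simp [Int.card_Icc]
  congr 1
  omega

lemma supNorm_eq_zero {d : ℕ} {x : V d} : supNorm x = 0 ↔ x = 0 := by
  simp only [supNorm, Nat.le_zero.symm, Finset.sup_le_iff, Finset.mem_univ, true_implies]
  constructor
  · intro h; funext i; have := h i; simpa [Int.natAbs_eq_zero] using this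
  · intro h; subst h; simp

lemma supNorm_triangle {d : ℕ} (a b : V d) : supNorm (a + b) ≤ supNorm a + supNorm b := by
  apply Finset.sup_le
  intro i _
  calc ((a + b) i).natAbs = (a i + b i).natAbs := rfl
    _ ≤ (a i).natAbs + (b i).natAbs := Int.natAbs_add_le _ _
    _ ≤ supNorm a + supNorm b :=
        Nat.add_le_add (Finset.le_sup (f := fun i => (a i).natAbs) (Finset.mem_univ i))
          (Finset.le_sup (f := fun i => (b i).natAbs) (Finset.mem_univ i))

lemma pow_sub_pow_nat : ∀ (k a b : ℕ), b ≤ a → a ^ (k+1) - b ^ (k+1) ≤ (k+1) * a ^ k * (a - b) := by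
  intro k
  induction k with
  | zero => intro a b h; simpa using Nat.sub_le_sub_right (le_refl a) b
  | succ k ih =>
    intro a b h
    have hb : b ^ (k+1) ≤ a ^ (k+1) := Nat.pow_le_pow_left h _
    have key : a ^ (k+2) - b ^ (k+2) = a * (a ^ (k+1) - b ^ (k+1)) + (a - b) * b ^ (k+1) := by
      rw [Nat.mul_sub, Nat.sub_mul]
      rw [tsub_add_tsub_cancel (Nat.mul_le_mul_left a hb) (Nat.mul_le_mul_right _ h)]
      ring_nf
    rw [key]
    calc a * (a ^ (k+1) - b ^ (k+1)) + (a - b) * b ^ (k+1)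
        ≤ a * ((k+1) * a ^ k * (a - b)) + (a - b) * a ^ (k+1) := by
          exact Nat.add_le_add (Nat.mul_le_mul_left a (ih a b h))
            (Nat.mul_le_mul_left _ hb)
      _ = (k+2) * a ^ (k+1) * (a - b) := by ring

lemma mem_shell {d n : ℕ} {y : V d} (h : y ∈ boxF d (n+1) \ boxF d n) : supNorm y = n + 1 := by
  rw [Finset.mem_sdiff, mem_boxF, mem_boxF] at h; omega

lemma card_shell_le {d n : ℕ} (hd : 1 ≤ d) :
    ((boxF d (n+1) \ boxF d n).card : ℕ) ≤ 2 * d * (2 * n + 3) ^ (d - 1) := by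
  rw [Finset.card_sdiff_of_subset (boxF_mono (Nat.le_succ n)), card_boxF, card_boxF]
  have hd' : d = (d - 1) + 1 := by omega
  have h := pow_sub_pow_nat (d - 1) (2 * (n+1) + 1) (2 * n + 1) (by omega)
  rw [← hd'] at h
  have h2 : 2 * (n + 1) + 1 = 2 * n + 3 := by omega
  rw [h2] at h
  have h3 : 2 * n + 3 - (2 * n + 1) = 2 := by omega
  rw [h3] at h
  calc (2*n+3)^d - (2*n+1)^d ≤ d * (2*n+3)^(d-1) * 2 := h
    _ = 2 * d * (2*n+3)^(d-1) := by ring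

lemma T1 (d L : ℕ) (hd : 2 ≤ d) (hL : 1 ≤ L) : ∀ R : ℕ,
    ∑ y ∈ boxF d R, 1 / ((max L (supNorm y) : ℕ) : ℝ) ^ (d - 2)
      ≤ 1 + ((2 * d * 3 ^ (d - 1) : ℕ) : ℝ) * (R : ℝ) ^ 2 := by
  intro R
  induction R with
  | zero =>
    have hbox : boxF d 0 = {0} := by
      ext y; rw [mem_boxF, Finset.mem_singleton, Nat.le_zero, supNorm_eq_zero]
    rw [hbox, Finset.sum_singleton]
    have h0 : supNorm (0 : V d) = 0 := supNorm_eq_zero.2 rfl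
    rw [h0]
    simp only [Nat.max_zero, Nat.cast_zero]
    have h1 : (1 : ℝ) ≤ ((L : ℕ) : ℝ) ^ (d - 2) := by
      apply one_le_pow₀
      exact_mod_cast hL
    have h2 : (0:ℝ) ≤ ((2 * d * 3 ^ (d - 1) : ℕ) : ℝ) * (0:ℝ)^2 := by positivity
    have := div_le_one_of_le₀ h1 (by positivity)
    push_cast at *
    nlinarith
  | succ R ih =>
    rw [← Finset.sum_sdiff (boxF_mono (Nat.le_succ R))]
    have hcard : ((boxF d (R+1) \ boxF d R).card : ℝ) ≤ ((2 * d * (2 * R + 3) ^ (d-1) : ℕ) : ℝ) :=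
      Nat.cast_le.2 (card_shell_le (by omega))
    have hterm : ∀ y ∈ boxF d (R+1) \ boxF d R,
        1 / ((max L (supNorm y) : ℕ) : ℝ) ^ (d - 2) ≤ 1 / ((R+1 : ℝ)) ^ (d - 2) := by
      intro y hy
      have h1 : supNorm y = R + 1 := mem_shell hy
      have h2 : ((R:ℝ)+1) ≤ ((max L (supNorm y) : ℕ) : ℝ) := by
        rw [h1]; exact_mod_cast Nat.le_max_right L (R+1)
      apply one_div_le_one_div_of_le (by positivity)
      exact pow_le_pow_left₀ (by positivity) h2 _
    have hshell : ∑ y ∈ boxF d (R+1) \ boxF d R,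
        1 / ((max L (supNorm y) : ℕ) : ℝ) ^ (d - 2)
        ≤ ((2 * d * 3 ^ (d-1) : ℕ) : ℝ) * ((R:ℝ) + 1) := by
      calc ∑ y ∈ boxF d (R+1) \ boxF d R, 1 / ((max L (supNorm y) : ℕ) : ℝ) ^ (d - 2)
          ≤ ((boxF d (R+1) \ boxF d R).card : ℝ) * (1 / ((R+1 : ℝ)) ^ (d - 2)) := by
            simpa using Finset.sum_le_card_nsmul _ _ _ hterm
        _ ≤ ((2 * d * (2 * R + 3) ^ (d-1) : ℕ) : ℝ) * (1 / ((R+1 : ℝ)) ^ (d - 2)) := by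
            apply mul_le_mul_of_nonneg_right hcard (by positivity)
        _ ≤ ((2 * d : ℕ) : ℝ) * (3 * ((R:ℝ)+1)) ^ (d-1) * (1 / ((R+1 : ℝ)) ^ (d - 2)) := by
            apply mul_le_mul_of_nonneg_right _ (by positivity)
            push_cast
            rw [mul_assoc, mul_assoc]
            apply mul_le_mul_of_nonneg_left _ (by norm_num)
            apply mul_le_mul_of_nonneg_left _ (by positivity)
            apply pow_le_pow_left₀ (by positivity)
            linarith
        _ = ((2 * d : ℕ) : ℝ) * 3 ^ (d-1) * ((R:ℝ)+1) ^ (d-1) * (1 / ((R+1 : ℝ)) ^ (d - 2)) := by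
            rw [mul_pow]; ring
        _ = ((2 * d * 3 ^ (d-1) : ℕ) : ℝ) * ((R:ℝ) + 1) := by
            have hde : d - 1 = (d - 2) + 1 := by omega
            rw [hde, pow_succ]
            have hpos : ((R:ℝ)+1) ^ (d-2) ≠ 0 := by positivity
            push_cast
            rw [pow_succ]
            field_simp
            ring
    have hc0 : (0:ℝ) ≤ ((2 * d * 3 ^ (d-1) : ℕ) : ℝ) := by positivity
    have hR : (0:ℝ) ≤ (R:ℝ) := by positivity
    push_cast at *
    nlinarith [ih, hshell]

lemma T2aux (d L : ℕ) (hd : 5 ≤ d) (hL : 1 ≤ L) (R : ℕ) (hR : 1 ≤ R) : ∀ k : ℕ,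
    ∑ y ∈ boxF d (R + k) \ boxF d R, 1 / ((max L (supNorm y) : ℕ) : ℝ) ^ (2 * (d - 2))
      ≤ ((2 * d * 3 ^ (d - 1) : ℕ) : ℝ) / (R:ℝ) ^ (d - 5) * (1 / (R:ℝ) - 1 / ((R:ℝ) + k)) := by
  intro k
  induction k with
  | zero => simp
  | succ k ih =>
    set c : ℝ := ((2 * d * 3 ^ (d - 1) : ℕ) : ℝ) with hc
    set n := R + k with hn'
    have hsplit : ∑ y ∈ boxF d (n + 1) \ boxF d R,
          1 / ((max L (supNorm y) : ℕ) : ℝ) ^ (2 * (d - 2))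
        = (∑ y ∈ boxF d (n + 1) \ boxF d n,
            1 / ((max L (supNorm y) : ℕ) : ℝ) ^ (2 * (d - 2)))
          + ∑ y ∈ boxF d n \ boxF d R,
            1 / ((max L (supNorm y) : ℕ) : ℝ) ^ (2 * (d - 2)) := by
      rw [Finset.sum_sdiff_eq_sub (boxF_mono (show R ≤ n + 1 by omega)),
        Finset.sum_sdiff_eq_sub (boxF_mono (show n ≤ n + 1 by omega)),
        Finset.sum_sdiff_eq_sub (boxF_mono (show R ≤ n by omega))]
      ring
    have hgoalidx : R + (k + 1) = n + 1 := by omega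
    rw [hgoalidx]
    have hcast : (R:ℝ) + ((k:ℕ) + 1 : ℕ) = (n:ℝ) + 1 := by push_cast [hn']; ring
    rw [show ((k+1 : ℕ):ℝ) = ((n:ℝ) + 1) - (R:ℝ) by push_cast [hn']; ring]
    rw [hsplit]
    have hterm : ∀ y ∈ boxF d (n+1) \ boxF d n,
        1 / ((max L (supNorm y) : ℕ) : ℝ) ^ (2 * (d - 2)) ≤ 1 / ((n:ℝ)+1) ^ (2 * (d - 2)) := by
      intro y hy
      have h1 : supNorm y = n + 1 := mem_shell hy
      have h2 : ((n:ℝ)+1) ≤ ((max L (supNorm y) : ℕ) : ℝ) := by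
        rw [h1]; exact_mod_cast Nat.le_max_right L (n+1)
      apply one_div_le_one_div_of_le (by positivity)
      exact pow_le_pow_left₀ (by positivity) h2 _
    have hcard : ((boxF d (n+1) \ boxF d n).card : ℝ) ≤ ((2 * d * (2 * n + 3) ^ (d-1) : ℕ) : ℝ) :=
      Nat.cast_le.2 (card_shell_le (by omega))
    have hshell : ∑ y ∈ boxF d (n+1) \ boxF d n,
        1 / ((max L (supNorm y) : ℕ) : ℝ) ^ (2 * (d - 2))
        ≤ c * ((n:ℝ)+1) ^ (d-1) / ((n:ℝ)+1) ^ (2 * (d-2)) := by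
      calc ∑ y ∈ boxF d (n+1) \ boxF d n, 1 / ((max L (supNorm y) : ℕ) : ℝ) ^ (2 * (d - 2))
          ≤ ((boxF d (n+1) \ boxF d n).card : ℝ) * (1 / ((n:ℝ)+1) ^ (2 * (d - 2))) := by
            simpa using Finset.sum_le_card_nsmul _ _ _ hterm
        _ ≤ ((2 * d * (2 * n + 3) ^ (d-1) : ℕ) : ℝ) * (1 / ((n:ℝ)+1) ^ (2 * (d - 2))) :=
            mul_le_mul_of_nonneg_right hcard (by positivity)
        _ ≤ c * ((n:ℝ)+1) ^ (d-1) * (1 / ((n:ℝ)+1) ^ (2 * (d-2))) := by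
            apply mul_le_mul_of_nonneg_right _ (by positivity)
            rw [hc]
            push_cast
            calc 2 * (d:ℝ) * (2 * (n:ℝ) + 3) ^ (d-1)
                ≤ 2 * (d:ℝ) * (3 * ((n:ℝ)+1)) ^ (d-1) := by
                  rw [mul_assoc, mul_assoc]
                  apply mul_le_mul_of_nonneg_left _ (by norm_num)
                  apply mul_le_mul_of_nonneg_left _ (by positivity)
                  apply pow_le_pow_left₀ (by positivity)
                  linarith
              _ = 2 * (d:ℝ) * 3 ^ (d-1) * ((n:ℝ)+1) ^ (d-1) := by rw [mul_pow]; ring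
        _ = c * ((n:ℝ)+1) ^ (d-1) / ((n:ℝ)+1) ^ (2 * (d-2)) := by ring
    have hn1 : (1:ℝ) ≤ (n:ℝ) := by
      have : 1 ≤ n := by omega
      exact_mod_cast this
    have hnR : (R:ℝ) ≤ (n:ℝ) := by exact_mod_cast Nat.le_add_right R k
    have hc0 : (0:ℝ) ≤ c := by rw [hc]; positivity
    have hkey : c * ((n:ℝ)+1) ^ (d-1) / ((n:ℝ)+1) ^ (2 * (d-2))
        ≤ c / (R:ℝ) ^ (d - 5) * (1/(n:ℝ) - 1/((n:ℝ)+1)) := by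
      have hexp : 2 * (d - 2) = (d - 1) + ((d - 5) + 2) := by omega
      have hpow : ((n:ℝ)+1) ^ (2 * (d-2))
          = ((n:ℝ)+1) ^ (d-1) * (((n:ℝ)+1) ^ (d-5) * ((n:ℝ)+1) ^ 2) := by
        rw [hexp, pow_add, pow_add]
      have hlow : (R:ℝ) ^ (d-5) * ((n:ℝ) * ((n:ℝ)+1))
          ≤ ((n:ℝ)+1) ^ (d-5) * ((n:ℝ)+1) ^ 2 := by
        have h1 : (R:ℝ) ^ (d-5) ≤ ((n:ℝ)+1) ^ (d-5) :=
          pow_le_pow_left₀ (by positivity) (by linarith) _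
        have h2 : (n:ℝ) * ((n:ℝ)+1) ≤ ((n:ℝ)+1) ^ 2 := by nlinarith
        exact mul_le_mul h1 h2 (by positivity) (by positivity)
      have htel : 1/(n:ℝ) - 1/((n:ℝ)+1) = 1 / ((n:ℝ) * ((n:ℝ)+1)) := by
        field_simp
        ring
      rw [hpow, htel]
      rw [div_mul_div_comm, div_le_div_iff₀ (by positivity) (by positivity)]
      calc c * ((n:ℝ)+1) ^ (d-1) * ((R:ℝ) ^ (d-5) * ((n:ℝ) * ((n:ℝ)+1)))
          ≤ c * ((n:ℝ)+1) ^ (d-1) * (((n:ℝ)+1) ^ (d-5) * ((n:ℝ)+1) ^ 2) :=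
            mul_le_mul_of_nonneg_left hlow (by positivity)
        _ = c * 1 * (((n:ℝ)+1) ^ (d-1) * (((n:ℝ)+1) ^ (d-5) * ((n:ℝ)+1) ^ 2)) := by
            ring
    have hfin : c / (R:ℝ) ^ (d - 5) * (1/(R:ℝ) - 1/(n:ℝ))
        + c / (R:ℝ) ^ (d - 5) * (1/(n:ℝ) - 1/((n:ℝ)+1))
        = c / (R:ℝ) ^ (d - 5) * (1/(R:ℝ) - 1/((R:ℝ) + (((n:ℝ) + 1) - (R:ℝ)))) := by
      ring_nf
    have hnk : (R:ℝ) + (k:ℝ) = ((n:ℕ):ℝ) := by push_cast [hn']; ring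
    rw [hnk] at ih
    linarith

lemma T1cor (d L : ℕ) (hd : 2 ≤ d) (hL : 1 ≤ L) (R : ℕ) (hR : 1 ≤ R) :
    ∑ y ∈ boxF d R, 1 / ((max L (supNorm y) : ℕ) : ℝ) ^ (d - 2)
      ≤ (1 + ((2 * d * 3 ^ (d - 1) : ℕ) : ℝ)) * (R : ℝ) ^ 2 := by
  have h := T1 d L hd hL R
  have hR1 : (1:ℝ) ≤ (R:ℝ) := by exact_mod_cast hR
  nlinarith [h, sq_nonneg ((R:ℝ) - 1)]

lemma T2 (d L : ℕ) (hd : 5 ≤ d) (hL : 1 ≤ L) (R : ℕ) (hR : 1 ≤ R) (N : ℕ) :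
    ∑ y ∈ boxF d N \ boxF d R, 1 / ((max L (supNorm y) : ℕ) : ℝ) ^ (2 * (d - 2))
      ≤ ((2 * d * 3 ^ (d - 1) : ℕ) : ℝ) / (R:ℝ) ^ (d - 4) := by
  rcases le_or_gt N R with hNR | hNR
  · have : boxF d N \ boxF d R = ∅ := by
      rw [Finset.sdiff_eq_empty_iff_subset]; exact boxF_mono hNR
    rw [this, Finset.sum_empty]
    positivity
  · obtain ⟨k, rfl⟩ : ∃ k, N = R + k := ⟨N - R, by omega⟩
    have h := T2aux d L hd hL R hR k
    have hR1 : (1:ℝ) ≤ (R:ℝ) := by exact_mod_cast hR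
    have hpow : (R:ℝ) ^ (d - 4) = (R:ℝ) ^ (d - 5) * (R:ℝ) := by
      rw [← pow_succ]; congr 1; omega
    have hRk : (0:ℝ) < (R:ℝ) + (k:ℝ) := by positivity
    have hc0 : (0:ℝ) ≤ ((2 * d * 3 ^ (d - 1) : ℕ) : ℝ) := by positivity
    calc ∑ y ∈ boxF d (R + k) \ boxF d R, 1 / ((max L (supNorm y) : ℕ) : ℝ) ^ (2 * (d - 2))
        ≤ ((2 * d * 3 ^ (d - 1) : ℕ) : ℝ) / (R:ℝ) ^ (d - 5) * (1 / (R:ℝ) - 1 / ((R:ℝ) + k)) := h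
      _ ≤ ((2 * d * 3 ^ (d - 1) : ℕ) : ℝ) / (R:ℝ) ^ (d - 5) * (1 / (R:ℝ)) := by
          apply mul_le_mul_of_nonneg_left _ (by positivity)
          have : 0 < 1 / ((R:ℝ) + k) := by positivity
          linarith
      _ = ((2 * d * 3 ^ (d - 1) : ℕ) : ℝ) / (R:ℝ) ^ (d - 4) := by
          rw [hpow]; field_simp

/-- The half-sum convolution bound, on sets where `|y| ≤ |x - y|`. -/
lemma convPart (d L : ℕ) (hd : 4 < d) (hL : 1 ≤ L) (x : V d) (s : Finset (V d))
    (hs : ∀ y ∈ s, supNorm y ≤ supNorm (x - y)) :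
    ∑ y ∈ s, (1 / ((max L (supNorm y) : ℕ) : ℝ) ^ (d - 2)) *
        (1 / ((max L (supNorm (x - y)) : ℕ) : ℝ) ^ (d - 2))
      ≤ (2 ^ (d-2) * (1 + ((2 * d * 3 ^ (d - 1) : ℕ) : ℝ)) + ((2 * d * 3 ^ (d - 1) : ℕ) : ℝ))
          / ((max L (supNorm x) : ℕ) : ℝ) ^ (d - 4) := by
  set R : ℕ := max L (supNorm x) with hR
  have hR1 : 1 ≤ R := le_trans hL (Nat.le_max_left _ _)
  have hR1' : (1:ℝ) ≤ (R:ℝ) := by exact_mod_cast hR1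
  set c0 : ℝ := ((2 * d * 3 ^ (d - 1) : ℕ) : ℝ) with hc0
  have hc0' : (0:ℝ) ≤ c0 := by rw [hc0]; positivity
  rw [← Finset.sum_filter_add_sum_filter_not s (fun y => supNorm y ≤ R)]
  have hpart1 : ∑ y ∈ s.filter (fun y => supNorm y ≤ R),
      (1 / ((max L (supNorm y) : ℕ) : ℝ) ^ (d - 2)) *
        (1 / ((max L (supNorm (x - y)) : ℕ) : ℝ) ^ (d - 2))
      ≤ 2 ^ (d-2) * (1 + c0) / (R:ℝ) ^ (d - 4) := by
    have hterm : ∀ y ∈ s.filter (fun y => supNorm y ≤ R),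
        (1 / ((max L (supNorm y) : ℕ) : ℝ) ^ (d - 2)) *
          (1 / ((max L (supNorm (x - y)) : ℕ) : ℝ) ^ (d - 2))
        ≤ (1 / ((max L (supNorm y) : ℕ) : ℝ) ^ (d - 2)) * (2 ^ (d-2) / (R:ℝ) ^ (d - 2)) := by
      intro y hy
      have hys := Finset.mem_filter.1 hy
      have htri : supNorm x ≤ 2 * supNorm (x - y) := by
        have h1 : supNorm x = supNorm ((x - y) + y) := by rw [sub_add_cancel]
        have h2 := supNorm_triangle (x - y) y
        have h3 := hs y hys.1
        omega
      have hRle : R ≤ 2 * max L (supNorm (x - y)) := by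
        apply Nat.max_le.2
        constructor
        · have := Nat.le_max_left L (supNorm (x - y)); omega
        · have := Nat.le_max_right L (supNorm (x - y)); omega
      have hM1 : (1:ℝ) ≤ ((max L (supNorm (x - y)) : ℕ) : ℝ) := by
        have : 1 ≤ max L (supNorm (x - y)) := le_trans hL (Nat.le_max_left _ _)
        exact_mod_cast this
      apply mul_le_mul_of_nonneg_left _ (by positivity)
      rw [div_le_div_iff₀ (by positivity) (by positivity)]
      calc 1 * (R:ℝ) ^ (d-2) ≤ (2 * ((max L (supNorm (x - y)) : ℕ) : ℝ)) ^ (d-2) := by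
            rw [one_mul]
            apply pow_le_pow_left₀ (by positivity)
            exact_mod_cast hRle
        _ = 2 ^ (d-2) * ((max L (supNorm (x - y)) : ℕ) : ℝ) ^ (d-2) := mul_pow _ _ _
    calc ∑ y ∈ s.filter (fun y => supNorm y ≤ R),
          (1 / ((max L (supNorm y) : ℕ) : ℝ) ^ (d - 2)) *
            (1 / ((max L (supNorm (x - y)) : ℕ) : ℝ) ^ (d - 2))
        ≤ ∑ y ∈ s.filter (fun y => supNorm y ≤ R),
            (1 / ((max L (supNorm y) : ℕ) : ℝ) ^ (d - 2)) * (2 ^ (d-2) / (R:ℝ) ^ (d - 2)) :=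
          Finset.sum_le_sum hterm
      _ = (∑ y ∈ s.filter (fun y => supNorm y ≤ R),
            1 / ((max L (supNorm y) : ℕ) : ℝ) ^ (d - 2)) * (2 ^ (d-2) / (R:ℝ) ^ (d - 2)) :=
          (Finset.sum_mul _ _ _).symm
      _ ≤ ((1 + c0) * (R:ℝ) ^ 2) * (2 ^ (d-2) / (R:ℝ) ^ (d - 2)) := by
          apply mul_le_mul_of_nonneg_right _ (by positivity)
          calc ∑ y ∈ s.filter (fun y => supNorm y ≤ R),
                1 / ((max L (supNorm y) : ℕ) : ℝ) ^ (d - 2)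
              ≤ ∑ y ∈ boxF d R, 1 / ((max L (supNorm y) : ℕ) : ℝ) ^ (d - 2) := by
                apply Finset.sum_le_sum_of_subset_of_nonneg
                · intro y hy
                  exact mem_boxF.2 (Finset.mem_filter.1 hy).2
                · intro y _ _; positivity
            _ ≤ (1 + c0) * (R:ℝ) ^ 2 := T1cor d L (by omega) hL R hR1
      _ = 2 ^ (d-2) * (1 + c0) / (R:ℝ) ^ (d - 4) := by
          have hpow : (R:ℝ) ^ (d-2) = (R:ℝ) ^ 2 * (R:ℝ) ^ (d-4) := by
            rw [← pow_add]; congr 1; omega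
          rw [hpow]
          have h2 : ((R:ℝ) ^ 2) ≠ 0 := by positivity
          have h4 : ((R:ℝ) ^ (d-4)) ≠ 0 := by positivity
          field_simp
  have hpart2 : ∑ y ∈ s.filter (fun y => ¬ supNorm y ≤ R),
      (1 / ((max L (supNorm y) : ℕ) : ℝ) ^ (d - 2)) *
        (1 / ((max L (supNorm (x - y)) : ℕ) : ℝ) ^ (d - 2))
      ≤ c0 / (R:ℝ) ^ (d - 4) := by
    set N : ℕ := s.sup supNorm with hN
    have hterm : ∀ y ∈ s.filter (fun y => ¬ supNorm y ≤ R),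
        (1 / ((max L (supNorm y) : ℕ) : ℝ) ^ (d - 2)) *
          (1 / ((max L (supNorm (x - y)) : ℕ) : ℝ) ^ (d - 2))
        ≤ 1 / ((max L (supNorm y) : ℕ) : ℝ) ^ (2 * (d - 2)) := by
      intro y hy
      have hys := Finset.mem_filter.1 hy
      have hM1 : (1:ℝ) ≤ ((max L (supNorm y) : ℕ) : ℝ) := by
        have : 1 ≤ max L (supNorm y) := le_trans hL (Nat.le_max_left _ _)
        exact_mod_cast this
      have hle : ((max L (supNorm y) : ℕ) : ℝ) ≤ ((max L (supNorm (x - y)) : ℕ) : ℝ) := by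
        have h3 := hs y hys.1
        have : max L (supNorm y) ≤ max L (supNorm (x - y)) := by
          have := Nat.le_max_left L (supNorm (x-y))
          have := Nat.le_max_right L (supNorm (x-y))
          apply Nat.max_le.2; omega
        exact_mod_cast this
      have hpow2 : ((max L (supNorm y) : ℕ) : ℝ) ^ (2 * (d - 2))
          = ((max L (supNorm y) : ℕ) : ℝ) ^ (d-2) * ((max L (supNorm y) : ℕ) : ℝ) ^ (d-2) := by
        rw [← pow_add]; congr 1; omega
      rw [hpow2, div_mul_div_comm, one_mul]
      apply div_le_div_of_nonneg_left (by norm_num) (by positivity)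
      apply mul_le_mul_of_nonneg_left _ (by positivity)
      exact pow_le_pow_left₀ (by positivity) hle _
    calc ∑ y ∈ s.filter (fun y => ¬ supNorm y ≤ R),
          (1 / ((max L (supNorm y) : ℕ) : ℝ) ^ (d - 2)) *
            (1 / ((max L (supNorm (x - y)) : ℕ) : ℝ) ^ (d - 2))
        ≤ ∑ y ∈ s.filter (fun y => ¬ supNorm y ≤ R),
            1 / ((max L (supNorm y) : ℕ) : ℝ) ^ (2 * (d - 2)) := Finset.sum_le_sum hterm
      _ ≤ ∑ y ∈ boxF d N \ boxF d R, 1 / ((max L (supNorm y) : ℕ) : ℝ) ^ (2 * (d - 2)) := by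
          apply Finset.sum_le_sum_of_subset_of_nonneg
          · intro y hy
            have hys := Finset.mem_filter.1 hy
            rw [Finset.mem_sdiff, mem_boxF, mem_boxF]
            exact ⟨Finset.le_sup hys.1, hys.2⟩
          · intro y _ _; positivity
      _ ≤ c0 / (R:ℝ) ^ (d - 4) := T2 d L (by omega) hL R hR1 N
  have : 2 ^ (d-2) * (1 + c0) / (R:ℝ) ^ (d - 4) + c0 / (R:ℝ) ^ (d - 4)
      = (2 ^ (d-2) * (1 + c0) + c0) / (R:ℝ) ^ (d - 4) := by ring
  linarith

/-- The full convolution bound. -/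
lemma convMain (d L : ℕ) (hd : 4 < d) (hL : 1 ≤ L) (x : V d) (s : Finset (V d)) :
    ∑ y ∈ s, (1 / ((max L (supNorm y) : ℕ) : ℝ) ^ (d - 2)) *
        (1 / ((max L (supNorm (x - y)) : ℕ) : ℝ) ^ (d - 2))
      ≤ 2 * (2 ^ (d-2) * (1 + ((2 * d * 3 ^ (d - 1) : ℕ) : ℝ)) + ((2 * d * 3 ^ (d - 1) : ℕ) : ℝ))
          / ((max L (supNorm x) : ℕ) : ℝ) ^ (d - 4) := by
  rw [← Finset.sum_filter_add_sum_filter_not s (fun y => supNorm y ≤ supNorm (x - y))]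
  set P := s.filter (fun y => supNorm y ≤ supNorm (x - y)) with hP
  set Q := s.filter (fun y => ¬ supNorm y ≤ supNorm (x - y)) with hQ
  have h1 : ∑ y ∈ P, (1 / ((max L (supNorm y) : ℕ) : ℝ) ^ (d - 2)) *
        (1 / ((max L (supNorm (x - y)) : ℕ) : ℝ) ^ (d - 2))
      ≤ (2 ^ (d-2) * (1 + ((2 * d * 3 ^ (d - 1) : ℕ) : ℝ)) + ((2 * d * 3 ^ (d - 1) : ℕ) : ℝ))
          / ((max L (supNorm x) : ℕ) : ℝ) ^ (d - 4) :=
    convPart d L hd hL x P (fun y hy => (Finset.mem_filter.1 hy).2)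
  have h2 : ∑ y ∈ Q, (1 / ((max L (supNorm y) : ℕ) : ℝ) ^ (d - 2)) *
        (1 / ((max L (supNorm (x - y)) : ℕ) : ℝ) ^ (d - 2))
      ≤ (2 ^ (d-2) * (1 + ((2 * d * 3 ^ (d - 1) : ℕ) : ℝ)) + ((2 * d * 3 ^ (d - 1) : ℕ) : ℝ))
          / ((max L (supNorm x) : ℕ) : ℝ) ^ (d - 4) := by
    have himg : ∑ y ∈ Q, (1 / ((max L (supNorm y) : ℕ) : ℝ) ^ (d - 2)) *
          (1 / ((max L (supNorm (x - y)) : ℕ) : ℝ) ^ (d - 2))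
        = ∑ z ∈ Q.image (fun y => x - y),
            (1 / ((max L (supNorm z) : ℕ) : ℝ) ^ (d - 2)) *
              (1 / ((max L (supNorm (x - z)) : ℕ) : ℝ) ^ (d - 2)) := by
      rw [Finset.sum_image (fun a _ b _ h => by
        have : x - (x - a) = x - (x - b) := by rw [h]
        simpa [_root_.sub_sub_cancel] using this)]
      apply Finset.sum_congr rfl
      intro y _
      rw [_root_.sub_sub_cancel x y, mul_comm]
    rw [himg]
    apply convPart d L hd hL x
    intro z hz
    obtain ⟨y, hy, rfl⟩ := Finset.mem_image.1 hz
    have := (Finset.mem_filter.1 hy).2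
    rw [_root_.sub_sub_cancel x y]
    omega
  have hR1 : (1:ℝ) ≤ ((max L (supNorm x) : ℕ) : ℝ) := by
    have : 1 ≤ max L (supNorm x) := le_trans hL (Nat.le_max_left _ _)
    exact_mod_cast this
  have : (0:ℝ) < ((max L (supNorm x) : ℕ) : ℝ) ^ (d - 4) := by positivity
  have hdd : 2 * (2 ^ (d-2) * (1 + ((2 * d * 3 ^ (d - 1) : ℕ) : ℝ)) + ((2 * d * 3 ^ (d - 1) : ℕ) : ℝ))
          / ((max L (supNorm x) : ℕ) : ℝ) ^ (d - 4)
      = (2 ^ (d-2) * (1 + ((2 * d * 3 ^ (d - 1) : ℕ) : ℝ)) + ((2 * d * 3 ^ (d - 1) : ℕ) : ℝ))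
          / ((max L (supNorm x) : ℕ) : ℝ) ^ (d - 4)
        + (2 ^ (d-2) * (1 + ((2 * d * 3 ^ (d - 1) : ℕ) : ℝ)) + ((2 * d * 3 ^ (d - 1) : ℕ) : ℝ))
          / ((max L (supNorm x) : ℕ) : ℝ) ^ (d - 4) := by ring
  rw [hdd]
  exact add_le_add h1 h2

lemma sum_ite_le {α : Type*} [DecidableEq α] (s : Finset α) (a : α) (c : ℝ) (hc : 0 ≤ c) :
    ∑ y ∈ s, (if y = a then c else 0) ≤ c := by
  rw [Finset.sum_ite_eq' s a (fun _ => c)]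
  split <;> [exact le_refl c; exact hc]

set_option maxHeartbeats 2000000 in
lemma masterReal (d L : ℕ) (hd : 4 < d) (hL : 1 ≤ L) (C : ℝ) (hC : 0 < C)
    (x : V d) (s : Finset (V d)) :
    ∑ y ∈ s,
      (((if y = 0 then (1:ℝ) else 0)
          + C / (L:ℝ)^d * ((L:ℝ) / max (L:ℝ) ((supNorm y : ℕ):ℝ))^(d-2)) *
       ((if x - y = 0 then (1:ℝ) else 0)
          + C / (L:ℝ)^d * ((L:ℝ) / max (L:ℝ) ((supNorm (x - y) : ℕ):ℝ))^(d-2)))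
    ≤ (1 + 2*C + C^2 * (2 * (2 ^ (d-2) * (1 + ((2 * d * 3 ^ (d - 1) : ℕ) : ℝ))
          + ((2 * d * 3 ^ (d - 1) : ℕ) : ℝ)))) *
      (if x = 0 then 1 else 1 / ((L:ℝ)^4 * ((max L (supNorm x) : ℕ):ℝ)^(d-4))) := by
  have hL0 : (0:ℝ) < (L:ℝ) := by exact_mod_cast hL
  have hL1 : (1:ℝ) ≤ (L:ℝ) := by exact_mod_cast hL
  set K : ℝ := 2 * (2 ^ (d-2) * (1 + ((2 * d * 3 ^ (d - 1) : ℕ) : ℝ))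
      + ((2 * d * 3 ^ (d - 1) : ℕ) : ℝ)) with hK
  have hK0 : 0 ≤ K := by rw [hK]; positivity
  have hMpos : ∀ z : V d, (0:ℝ) < ((max L (supNorm z) : ℕ) : ℝ) := by
    intro z
    have : 1 ≤ max L (supNorm z) := le_trans hL (Nat.le_max_left _ _)
    exact_mod_cast lt_of_lt_of_le Nat.zero_lt_one this
  have hM1 : ∀ z : V d, (1:ℝ) ≤ ((max L (supNorm z) : ℕ) : ℝ) := by
    intro z
    have : 1 ≤ max L (supNorm z) := le_trans hL (Nat.le_max_left _ _)
    exact_mod_cast this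
  have hgz : ∀ z : V d, C / (L:ℝ)^d * ((L:ℝ) / max (L:ℝ) ((supNorm z : ℕ):ℝ))^(d-2)
      = C / (L:ℝ)^2 * (1 / ((max L (supNorm z) : ℕ):ℝ)^(d-2)) := by
    intro z
    have hcast : max (L:ℝ) ((supNorm z : ℕ):ℝ) = ((max L (supNorm z) : ℕ):ℝ) :=
      (Nat.cast_max _ _).symm
    rw [hcast]
    have hLd : (L:ℝ)^d = (L:ℝ)^2 * (L:ℝ)^(d-2) := by rw [← pow_add]; congr 1; omega
    rw [div_pow, hLd]
    have h1 : ((max L (supNorm z) : ℕ):ℝ) ≠ 0 := ne_of_gt (hMpos z)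
    field_simp
  -- split the sum into four pieces
  have hsplit : ∑ y ∈ s,
      (((if y = 0 then (1:ℝ) else 0)
          + C / (L:ℝ)^d * ((L:ℝ) / max (L:ℝ) ((supNorm y : ℕ):ℝ))^(d-2)) *
       ((if x - y = 0 then (1:ℝ) else 0)
          + C / (L:ℝ)^d * ((L:ℝ) / max (L:ℝ) ((supNorm (x - y) : ℕ):ℝ))^(d-2)))
      = (∑ y ∈ s, (if y = 0 then (1:ℝ) else 0) * (if x - y = 0 then (1:ℝ) else 0))
        + (∑ y ∈ s, (if y = 0 then (1:ℝ) else 0)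
            * (C / (L:ℝ)^2 * (1 / ((max L (supNorm (x - y)) : ℕ):ℝ)^(d-2))))
        + (∑ y ∈ s, (C / (L:ℝ)^2 * (1 / ((max L (supNorm y) : ℕ):ℝ)^(d-2)))
            * (if x - y = 0 then (1:ℝ) else 0))
        + (C / (L:ℝ)^2) * (C / (L:ℝ)^2) *
          ∑ y ∈ s, (1 / ((max L (supNorm y) : ℕ):ℝ)^(d-2))
            * (1 / ((max L (supNorm (x - y)) : ℕ):ℝ)^(d-2)) := by
    rw [Finset.mul_sum, ← Finset.sum_add_distrib, ← Finset.sum_add_distrib,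
      ← Finset.sum_add_distrib]
    apply Finset.sum_congr rfl
    intro y _
    rw [hgz y, hgz (x - y)]
    ring
  rw [hsplit]
  -- bound each piece
  have hee : ∑ y ∈ s, (if y = 0 then (1:ℝ) else 0) * (if x - y = 0 then (1:ℝ) else 0)
      ≤ (if x = 0 then (1:ℝ) else 0) := by
    calc ∑ y ∈ s, (if y = 0 then (1:ℝ) else 0) * (if x - y = 0 then (1:ℝ) else 0)
        ≤ ∑ y ∈ s, (if y = 0 then (if x = 0 then (1:ℝ) else 0) else 0) := by
          apply Finset.sum_le_sum
          intro y _
          by_cases hy : y = (0 : V d)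
          · subst hy; simp [sub_zero]
          · simp [hy]
      _ ≤ (if x = 0 then (1:ℝ) else 0) := by
          apply sum_ite_le
          split <;> norm_num
  have heh : ∑ y ∈ s, (if y = 0 then (1:ℝ) else 0)
        * (C / (L:ℝ)^2 * (1 / ((max L (supNorm (x - y)) : ℕ):ℝ)^(d-2)))
      ≤ C / (L:ℝ)^2 * (1 / ((max L (supNorm x) : ℕ):ℝ)^(d-2)) := by
    calc ∑ y ∈ s, (if y = 0 then (1:ℝ) else 0)
          * (C / (L:ℝ)^2 * (1 / ((max L (supNorm (x - y)) : ℕ):ℝ)^(d-2)))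
        ≤ ∑ y ∈ s, (if y = 0 then C / (L:ℝ)^2 * (1 / ((max L (supNorm x) : ℕ):ℝ)^(d-2)) else 0) := by
          apply Finset.sum_le_sum
          intro y _
          by_cases hy : y = (0 : V d)
          · subst hy; simp [sub_zero]
          · simp [hy]
      _ ≤ C / (L:ℝ)^2 * (1 / ((max L (supNorm x) : ℕ):ℝ)^(d-2)) := by
          apply sum_ite_le
          positivity
  have hhe : ∑ y ∈ s, (C / (L:ℝ)^2 * (1 / ((max L (supNorm y) : ℕ):ℝ)^(d-2)))
        * (if x - y = 0 then (1:ℝ) else 0)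
      ≤ C / (L:ℝ)^2 * (1 / ((max L (supNorm x) : ℕ):ℝ)^(d-2)) := by
    calc ∑ y ∈ s, (C / (L:ℝ)^2 * (1 / ((max L (supNorm y) : ℕ):ℝ)^(d-2)))
          * (if x - y = 0 then (1:ℝ) else 0)
        ≤ ∑ y ∈ s, (if y = x then C / (L:ℝ)^2 * (1 / ((max L (supNorm x) : ℕ):ℝ)^(d-2)) else 0) := by
          apply Finset.sum_le_sum
          intro y _
          by_cases hy : x - y = 0
          · have hyx : y = x := (sub_eq_zero.1 hy).symm
            subst hyx
            simp
          · have hyx : y ≠ x := fun h => hy (by rw [h, sub_self])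
            simp [hy, hyx]
      _ ≤ C / (L:ℝ)^2 * (1 / ((max L (supNorm x) : ℕ):ℝ)^(d-2)) := by
          apply sum_ite_le
          positivity
  have hhh : (C / (L:ℝ)^2) * (C / (L:ℝ)^2) *
        ∑ y ∈ s, (1 / ((max L (supNorm y) : ℕ):ℝ)^(d-2))
          * (1 / ((max L (supNorm (x - y)) : ℕ):ℝ)^(d-2))
      ≤ (C / (L:ℝ)^2) * (C / (L:ℝ)^2) * (K / ((max L (supNorm x) : ℕ) : ℝ) ^ (d - 4)) := by
    apply mul_le_mul_of_nonneg_left _ (by positivity)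
    exact convMain d L hd hL x s
  -- abbreviations for the final arithmetic
  set R : ℝ := ((max L (supNorm x) : ℕ) : ℝ) with hRdef
  have hR1 : (1:ℝ) ≤ R := hM1 x
  have hRL : (L:ℝ) ≤ R := by
    rw [hRdef]; exact_mod_cast Nat.le_max_left L (supNorm x)
  have hRpow : R ^ (d-2) = R^2 * R^(d-4) := by rw [← pow_add]; congr 1; omega
  by_cases hx : x = (0 : V d)
  · -- at the origin
    rw [if_pos hx]
    have hRLeq : R = (L:ℝ) := by
      rw [hRdef, hx]
      have : supNorm (0 : V d) = 0 := supNorm_eq_zero.2 rfl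
      rw [this]
      simp
    have hb1 : C / (L:ℝ)^2 * (1 / R^(d-2)) ≤ C := by
      rw [hRLeq]
      have h1 : (1:ℝ) ≤ (L:ℝ)^2 * (L:ℝ)^(d-2) := by
        have := one_le_pow₀ (n := 2) hL1
        have := one_le_pow₀ (n := d-2) hL1
        nlinarith
      rw [div_mul_div_comm, mul_one]
      rw [div_le_iff₀ (by positivity)]
      nlinarith
    have hb2 : (C / (L:ℝ)^2) * (C / (L:ℝ)^2) * (K / R ^ (d - 4)) ≤ C^2 * K := by
      rw [hRLeq]
      have h1 : (1:ℝ) ≤ (L:ℝ)^2 * (L:ℝ)^2 * (L:ℝ)^(d-4) := by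
        have := one_le_pow₀ (n := 2) hL1
        have := one_le_pow₀ (n := d-4) hL1
        nlinarith
      rw [div_mul_div_comm, div_mul_div_comm, div_le_iff₀ (by positivity)]
      have hmul := mul_le_mul_of_nonneg_left h1 (mul_nonneg (mul_nonneg hC.le hC.le) hK0)
      nlinarith [hmul]
    have hee' := hee
    rw [if_pos hx] at hee'
    nlinarith [hee', heh, hhe, hb1, hb2]
  · -- away from the origin
    rw [if_neg hx]
    have hee' := hee
    rw [if_neg hx] at hee'
    have hb1 : C / (L:ℝ)^2 * (1 / R^(d-2)) ≤ C * (1 / ((L:ℝ)^4 * R^(d-4))) := by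
      rw [hRpow, div_mul_div_comm, mul_one, mul_one_div]
      apply div_le_div_of_nonneg_left (le_of_lt hC) (by positivity)
      have h4 : (L:ℝ)^4 = (L:ℝ)^2 * (L:ℝ)^2 := by ring
      rw [h4]
      have h5 : (L:ℝ)^2 ≤ R^2 := by nlinarith
      have h6 : (0:ℝ) ≤ R^(d-4) := by positivity
      have h7 : (L:ℝ)^2*R^(d-4) ≤ R^2*R^(d-4) := mul_le_mul_of_nonneg_right h5 h6
      have h8 := mul_le_mul_of_nonneg_left h7 (pow_nonneg hL0.le 2)
      nlinarith [h8]
    have hb2 : (C / (L:ℝ)^2) * (C / (L:ℝ)^2) * (K / R ^ (d - 4))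
        ≤ C^2 * K * (1 / ((L:ℝ)^4 * R^(d-4))) := by
      have hLne : (L:ℝ) ≠ 0 := ne_of_gt hL0
      have hRne : R^(d-4) ≠ 0 := by positivity
      have heq : (C / (L:ℝ)^2) * (C / (L:ℝ)^2) * (K / R ^ (d - 4))
          = C^2 * K * (1 / ((L:ℝ)^4 * R^(d-4))) := by
        field_simp
      exact le_of_eq heq
    have hpos : (0:ℝ) < 1 / ((L:ℝ)^4 * R^(d-4)) := by positivity
    nlinarith [hee', heh, hhe, hb1, hb2]

lemma liftBound (d L : ℕ) (hd : 4 < d) (hL : 1 ≤ L) (C : ℝ) (hC : 0 < C)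
    (f : V d → ℝ≥0∞)
    (hf : ∀ x : V d, f x ≤ (if x = 0 then 1 else 0) +
        ENNReal.ofReal (C / (L : ℝ) ^ d *
          ((L : ℝ) / max (L : ℝ) (supNorm x : ℝ)) ^ (d - 2)))
    (x : V d) :
    (∑' y : V d, f y * f (x - y)) ≤ ENNReal.ofReal
      ((1 + 2*C + C^2 * (2 * (2 ^ (d-2) * (1 + ((2 * d * 3 ^ (d - 1) : ℕ) : ℝ))
          + ((2 * d * 3 ^ (d - 1) : ℕ) : ℝ)))) *
        (if x = 0 then 1 else 1 / ((L:ℝ)^4 * ((max L (supNorm x) : ℕ):ℝ)^(d-4)))) := by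
  have hL0 : (0:ℝ) < (L:ℝ) := by exact_mod_cast hL
  set g : V d → ℝ := fun z => (if z = 0 then (1:ℝ) else 0)
      + C / (L:ℝ)^d * ((L:ℝ) / max (L:ℝ) ((supNorm z : ℕ):ℝ))^(d-2) with hg
  have hgpos : ∀ z : V d, 0 ≤ g z := by
    intro z
    simp only [hg]
    have h2 : (0:ℝ) ≤ C / (L:ℝ)^d * ((L:ℝ) / max (L:ℝ) ((supNorm z : ℕ):ℝ))^(d-2) := by
      positivity
    split <;> linarith
  have hfg : ∀ z : V d, f z ≤ ENNReal.ofReal (g z) := by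
    intro z
    refine (hf z).trans (le_of_eq ?_)
    simp only [hg]
    rw [ENNReal.ofReal_add (by split <;> norm_num) (by positivity)]
    congr 1
    split <;> simp
  calc ∑' y : V d, f y * f (x - y)
      ≤ ∑' y : V d, ENNReal.ofReal (g y * g (x - y)) := by
        apply ENNReal.tsum_le_tsum
        intro y
        rw [ENNReal.ofReal_mul (hgpos y)]
        exact mul_le_mul' (hfg y) (hfg (x - y))
    _ ≤ ENNReal.ofReal
        ((1 + 2*C + C^2 * (2 * (2 ^ (d-2) * (1 + ((2 * d * 3 ^ (d - 1) : ℕ) : ℝ))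
            + ((2 * d * 3 ^ (d - 1) : ℕ) : ℝ)))) *
          (if x = 0 then 1 else 1 / ((L:ℝ)^4 * ((max L (supNorm x) : ℕ):ℝ)^(d-4)))) := by
        rw [ENNReal.tsum_eq_iSup_sum]
        apply iSup_le
        intro s
        rw [← ENNReal.ofReal_sum_of_nonneg (fun y _ => mul_nonneg (hgpos y) (hgpos (x - y)))]
        exact ENNReal.ofReal_le_ofReal (masterReal d L hd hL C hC x s)


/-- Proposition B.1: the convolution estimate. -/
theorem convolutionEstimate (d : ℕ) (hd : 4 < d) (C : ℝ) (hC : 0 < C) :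
    ∃ A : ℝ, 0 < A ∧ ∀ L : ℕ, 1 ≤ L → ∀ f : V d → ℝ≥0∞,
      (∀ x : V d, f x ≤ (if x = 0 then 1 else 0) +
        ENNReal.ofReal (C / (L : ℝ) ^ d *
          ((L : ℝ) / max (L : ℝ) (supNorm x : ℝ)) ^ (d - 2))) →
      (∑' y : V d, f y * f ((0 : V d) - y)) ≤ ENNReal.ofReal A ∧
      ∀ x : V d, x ≠ 0 →
        (∑' y : V d, f y * f (x - y)) ≤ ENNReal.ofReal (A / (L : ℝ) ^ 4 *
          (1 / max (L : ℝ) (supNorm x : ℝ)) ^ (d - 4)) := by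

  refine ⟨1 + 2*C + C^2 * (2 * (2 ^ (d-2) * (1 + ((2 * d * 3 ^ (d - 1) : ℕ) : ℝ))
      + ((2 * d * 3 ^ (d - 1) : ℕ) : ℝ))), by positivity, ?_⟩
  intro L hL f hf
  have hL0 : (0:ℝ) < (L:ℝ) := by exact_mod_cast hL
  constructor
  · have h := liftBound d L hd hL C hC f hf 0
    rw [if_pos rfl, mul_one] at h
    exact h
  · intro x hx
    have h := liftBound d L hd hL C hC f hf x
    rw [if_neg hx] at h
    refine h.trans (le_of_eq (congrArg ENNReal.ofReal ?_))
    have hcast : max (L:ℝ) ((supNorm x : ℕ):ℝ) = ((max L (supNorm x) : ℕ):ℝ) :=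
      (Nat.cast_max _ _).symm
    rw [hcast]
    have hM : (0:ℝ) < ((max L (supNorm x) : ℕ):ℝ) := by
      have : 1 ≤ max L (supNorm x) := le_trans hL (Nat.le_max_left _ _)
      exact_mod_cast lt_of_lt_of_le Nat.zero_lt_one this
    rw [div_pow, one_pow]
    field_simp


end SpreadOutPerco
end
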